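/- arXiv:1303.0054 — 6 statements merged into one kernel-verified Lean document; each statement's English description precedes it below -/
import Mathlib

section
/- Let N ≥ 1, let μ be probability weights on {1,…,N}, and let f_1,…,f_n : {1,…,N} → ℝ be functions that are nonnegative (f_i(j) ≥ 0 for all i, j) and nondecreasing (f_i(j) ≤ f_i(j') whenever j ≤ j'). Then E_n(f_1,…,f_n) ≥ 0. -/
/-!
`E_n` is multilinear in `(f_1, …, f_n)`, and a nonnegative nondecreasing function on
`{1,…,N}` is a nonnegative combination of the indicators `1_{[k,N]}`, so it suffices to treat
`f_i = 1_{[k_i,N]}`. Then `⟨∏_{s ∈ b} f_s⟩_μ = μ[max_{s ∈ b} k_s, N]` does not change when an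
index `a` with minimal `k_a` is added to a nonempty block. Sorting the set partitions of
`insert a s` by the block that receives `a` gives `E(insert a s) = (|s| - ⟨f_a⟩_μ) E(s)`, and
`E({a}) = ⟨f_a⟩_μ ∈ [0, 1]`, so `E ≥ 0` by induction.
-/

open Finset
open scoped Nat

namespace Finpartition

variable {α : Type*} [DecidableEq α] {a : α} {s : Finset α}

lemma subset_of_mem_insert_empty (P : Finpartition s) {b : Finset α}
    (hb : b ∈ insert ∅ P.parts) : b ⊆ s := by
  rcases mem_insert.1 hb with rfl | hb
  · exact empty_subset s
  · exact P.le hb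

lemma sup_erase_parts_eq_sdiff (P : Finpartition s) {b : Finset α} (hb : b ∈ insert ∅ P.parts) :
    (P.parts.erase b).sup id = s \ b := by
  rcases mem_insert.1 hb with rfl | hb
  · rw [erase_eq_of_notMem P.empty_notMem_parts, sdiff_empty, P.sup_parts]
  · have hdisj : Disjoint b ((P.parts.erase b).sup id) :=
      P.supIndep (erase_subset b P.parts) hb (notMem_erase b P.parts)
    conv_rhs => rw [← P.sup_parts, ← insert_erase hb, sup_insert, id_eq, sup_eq_union,
      union_sdiff_cancel_left hdisj]

def insertPart (ha : a ∉ s) (P : Finpartition s) (b : Finset α) (hb : b ∈ insert ∅ P.parts) :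
    Finpartition (insert a s) :=
  (P.ofSubset (erase_subset b P.parts) (P.sup_erase_parts_eq_sdiff hb)).extend
    (insert_ne_empty a b)
    (disjoint_insert_right.2 ⟨fun h => ha (mem_sdiff.1 h).1, sdiff_disjoint⟩)
    (by rw [sup_eq_union, union_insert, sdiff_union_of_subset (P.subset_of_mem_insert_empty hb)])

@[simp]
lemma insertPart_parts (ha : a ∉ s) (P : Finpartition s) (b : Finset α)
    (hb : b ∈ insert ∅ P.parts) :
    (P.insertPart ha b hb).parts = insert (insert a b) (P.parts.erase b) := rfl

def erasePart (ha : a ∉ s) (Q : Finpartition (insert a s)) : Finpartition s :=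
  (Q.avoid {a}).copy (by
    rw [insert_sdiff_of_mem _ (mem_singleton_self a), sdiff_singleton_eq_erase,
      erase_eq_of_notMem ha])

@[simp]
lemma erasePart_parts (ha : a ∉ s) (Q : Finpartition (insert a s)) :
    (Q.erasePart ha).parts = (Q.parts.image (· \ {a})).erase ∅ := rfl

lemma erasePart_insertPart (ha : a ∉ s) (P : Finpartition s) (b : Finset α)
    (hb : b ∈ insert ∅ P.parts) : (P.insertPart ha b hb).erasePart ha = P := by
  have hab : a ∉ b := fun h => ha (P.subset_of_mem_insert_empty hb h)
  have hP : ∀ d ∈ P.parts, d \ {a} = d := fun d hd =>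
    sdiff_singleton_eq_erase a d ▸ erase_eq_of_notMem fun h => ha (P.le hd h)
  have hb' : insert a b \ {a} = b := by
    rw [insert_sdiff_of_mem _ (mem_singleton_self a), sdiff_singleton_eq_erase,
      erase_eq_of_notMem hab]
  ext c
  simp only [erasePart_parts, insertPart_parts, image_insert, hb', mem_erase, mem_insert, mem_image]
  have := P.empty_notMem_parts
  grind

lemma part_insertPart (ha : a ∉ s) (P : Finpartition s) (b : Finset α)
    (hb : b ∈ insert ∅ P.parts) : (P.insertPart ha b hb).part a = insert a b :=
  part_eq_of_mem _ (mem_insert_self _ _) (mem_insert_self a b)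

lemma erase_part_mem (ha : a ∉ s) (Q : Finpartition (insert a s)) :
    (Q.part a).erase a ∈ insert ∅ (Q.erasePart ha).parts := by
  by_cases h : (Q.part a).erase a = ∅
  · exact h ▸ mem_insert_self _ _
  · refine mem_insert_of_mem (mem_erase.2 ⟨h, mem_image.2 ⟨Q.part a, ?_, ?_⟩⟩)
    · exact Q.part_mem.2 (mem_insert_self a s)
    · exact sdiff_singleton_eq_erase a _

lemma insertPart_erasePart (ha : a ∉ s) (Q : Finpartition (insert a s)) :
    (Q.erasePart ha).insertPart ha ((Q.part a).erase a) (Q.erase_part_mem ha) = Q := by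
  have hQ : ∀ d ∈ Q.parts, d = Q.part a ∨ d.erase a = d := fun d hd =>
    or_iff_not_imp_left.2 fun hne =>
      erase_eq_of_notMem fun h => hne (Q.part_eq_of_mem hd h).symm
  have hpart : Q.part a ∈ Q.parts := Q.part_mem.2 (mem_insert_self a s)
  have herase : (Q.part a).erase a ∉ Q.parts := fun h => by
    obtain ⟨x, hx⟩ := Q.nonempty_of_mem_parts h
    have := Q.eq_of_mem_parts h hpart hx (mem_of_mem_erase hx)
    exact notMem_erase a _ (this ▸ Q.mem_part (mem_insert_self a s))
  rw [Finpartition.ext_iff]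
  simp only [erasePart_parts, insertPart_parts, insert_erase (Q.mem_part (mem_insert_self a s))]
  ext c
  simp only [mem_erase, mem_insert, mem_image, sdiff_singleton_eq_erase]
  have := Q.empty_notMem_parts
  grind

/-- The second component is the part of `P` that receives `a`, with `∅` standing for the new
singleton part `{a}`. -/
def insertPartEquiv (ha : a ∉ s) :
    (Σ P : Finpartition s, {b // b ∈ insert ∅ P.parts}) ≃ Finpartition (insert a s) where
  toFun x := x.1.insertPart ha x.2 x.2.2
  invFun Q := ⟨Q.erasePart ha, (Q.part a).erase a, Q.erase_part_mem ha⟩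
  left_inv := fun ⟨P, b, hb⟩ => Sigma.subtype_ext (erasePart_insertPart ha P b hb) (by
    simp only [part_insertPart, erase_insert fun h => ha (P.subset_of_mem_insert_empty hb h)])
  right_inv := insertPart_erasePart ha

end Finpartition

section SignedPartitionSum

variable {α : Type*} [DecidableEq α]

noncomputable def signedWeight (v : Finset α → ℝ) {s : Finset α} (P : Finpartition s) : ℝ :=
  (-1 : ℝ) ^ (#P.parts + 1) * (∏ b ∈ P.parts, ((#b - 1)! : ℝ)) * ∏ b ∈ P.parts, v b

noncomputable def signedPartitionSum (v : Finset α → ℝ) (s : Finset α) : ℝ :=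
  ∑ P : Finpartition s, signedWeight v P

variable {a : α} {s : Finset α}

lemma signedWeight_insertPart (ha : a ∉ s) (v : Finset α → ℝ)
    (hv : ∀ b ⊆ s, b.Nonempty → v (insert a b) = v b)
    (P : Finpartition s) (b : Finset α) (hb : b ∈ insert ∅ P.parts) :
    signedWeight v (P.insertPart ha b hb) =
      (if b = ∅ then -v {a} else (#b : ℝ)) * signedWeight v P := by
  have hab : a ∉ b := fun h => ha (P.subset_of_mem_insert_empty hb h)
  have hnew : insert a b ∉ P.parts.erase b := fun h =>
    ha (P.le (mem_of_mem_erase h) (mem_insert_self a b))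
  rcases mem_insert.1 hb with rfl | hbP
  · simp only [insert_empty_eq, erase_eq_of_notMem P.empty_notMem_parts] at hnew
    simp only [signedWeight, Finpartition.insertPart_parts, insert_empty_eq,
      erase_eq_of_notMem P.empty_notMem_parts, if_true]
    rw [card_insert_of_notMem hnew, prod_insert hnew, prod_insert hnew]
    simp only [card_singleton, Nat.sub_self, Nat.factorial_zero, Nat.cast_one]
    ring
  · have hbne : b.Nonempty := P.nonempty_of_mem_parts hbP
    simp only [signedWeight, Finpartition.insertPart_parts, if_neg hbne.ne_empty]
    rw [card_insert_of_notMem hnew, card_erase_add_one hbP, prod_insert hnew, prod_insert hnew,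
      card_insert_of_notMem hab, Nat.add_sub_cancel, hv b (P.le hbP) hbne,
      ← Nat.mul_factorial_pred hbne.card_pos.ne', ← mul_prod_erase P.parts _ hbP,
      ← mul_prod_erase P.parts v hbP]
    push_cast
    ring

lemma signedPartitionSum_insert (ha : a ∉ s) (v : Finset α → ℝ)
    (hv : ∀ b ⊆ s, b.Nonempty → v (insert a b) = v b) :
    signedPartitionSum v (insert a s) = (#s - v {a}) * signedPartitionSum v s := by
  have hfactor (P : Finpartition s) :
      ∑ b ∈ insert ∅ P.parts, (if b = ∅ then -v {a} else (#b : ℝ)) * signedWeight v P =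
        (#s - v {a}) * signedWeight v P := by
    rw [sum_insert P.empty_notMem_parts, if_pos rfl,
      sum_congr rfl fun b hb => by rw [if_neg (P.ne_empty hb)], ← sum_mul, ← Nat.cast_sum,
      P.sum_card_parts]
    ring
  rw [signedPartitionSum, ← (Finpartition.insertPartEquiv ha).sum_comp, Fintype.sum_sigma,
    signedPartitionSum, mul_sum]
  refine sum_congr rfl fun P _ => ?_
  rw [← hfactor, ← sum_coe_sort (insert ∅ P.parts)]
  exact sum_congr rfl fun b _ => signedWeight_insertPart ha v hv P b b.2

lemma signedPartitionSum_empty (v : Finset α → ℝ) : signedPartitionSum v ∅ = -1 := by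
  have : Unique (Finpartition (∅ : Finset α)) := inferInstanceAs (Unique (Finpartition ⊥))
  rw [signedPartitionSum, Fintype.sum_unique, signedWeight,
    Finpartition.parts_eq_empty_iff.2 bot_eq_empty]
  norm_num

end SignedPartitionSum

lemma signedPartitionSum_nonneg {α β : Type*} [DecidableEq α] [LinearOrder β]
    (v : Finset α → ℝ) (k : α → β) (hv0 : ∀ x, 0 ≤ v {x}) (hv1 : ∀ x, v {x} ≤ 1)
    (hv : ∀ x b, b.Nonempty → (∀ y ∈ b, k x ≤ k y) → v (insert x b) = v b)
    {s : Finset α} (hs : s.Nonempty) : 0 ≤ signedPartitionSum v s := by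
  revert hs
  refine Finset.induction_on_min_value k s (fun h => absurd h not_nonempty_empty)
    fun a s ha hmin ih _ => ?_
  rw [signedPartitionSum_insert ha v fun b hb hbne => hv a b hbne fun y hy => hmin y (hb hy)]
  rcases s.eq_empty_or_nonempty with rfl | hs
  · simpa [signedPartitionSum_empty] using hv0 a
  · have hcard : (1 : ℝ) ≤ #s := by exact_mod_cast hs.card_pos
    exact mul_nonneg (by linarith [hv1 a]) (ih hs)

section Moment

variable {ι Ω K : Type*} [Fintype ι] [DecidableEq ι] [Fintype Ω] [Fintype K]

/-- `moment μ F b = ⟨∏_{i ∈ b} F_i⟩_μ`, so `signedPartitionSum (moment μ f) univ` is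
`E_n(f_1, …, f_n)`. -/
def moment (μ : Ω → ℝ) (F : ι → Ω → ℝ) (b : Finset ι) : ℝ := ∑ j, μ j * ∏ i ∈ b, F i j

lemma prod_moment_eq_sum (σ : Finpartition (univ : Finset ι)) (μ : Ω → ℝ) (F : ι → Ω → ℝ) :
    ∏ b ∈ σ.parts, moment μ F b =
      ∑ J : σ.parts → Ω,
        (∏ b, μ (J b)) * ∏ i, F i (J ⟨σ.part i, σ.part_mem.2 (mem_univ i)⟩) := by
  let π : ι → σ.parts := fun i => ⟨σ.part i, σ.part_mem.2 (mem_univ i)⟩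
  have hfiber (b : σ.parts) : univ.filter (fun i => π i = b) = b.1 := by
    ext i
    simp [π, Subtype.ext_iff, σ.part_eq_iff_mem b.2]
  rw [← prod_coe_sort σ.parts]
  unfold moment
  rw [Fintype.prod_sum]
  refine sum_congr rfl fun J _ => ?_
  rw [prod_mul_distrib, ← prod_fiberwise univ π]
  refine congrArg _ (prod_congr rfl fun b _ => prod_congr (hfiber b).symm fun i hi => ?_)
  exact congrArg (F i ∘ J) (mem_filter.1 hi).2.symm

lemma prod_moment_sum_mul (σ : Finpartition (univ : Finset ι)) (μ : Ω → ℝ) (c : ι → K → ℝ)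
    (g : K → Ω → ℝ) :
    ∏ b ∈ σ.parts, moment μ (fun i j => ∑ k, c i k * g k j) b =
      ∑ κ : ι → K, (∏ i, c i (κ i)) * ∏ b ∈ σ.parts, moment μ (fun i => g (κ i)) b := by
  simp only [prod_moment_eq_sum, Fintype.prod_sum, mul_sum, prod_mul_distrib]
  rw [sum_comm]
  exact sum_congr rfl fun κ _ => sum_congr rfl fun J _ => by ring

lemma signedPartitionSum_moment_sum_mul (μ : Ω → ℝ) (c : ι → K → ℝ) (g : K → Ω → ℝ) :
    signedPartitionSum (moment μ fun i j => ∑ k, c i k * g k j) univ =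
      ∑ κ : ι → K, (∏ i, c i (κ i)) *
        signedPartitionSum (moment μ fun i => g (κ i)) univ := by
  simp only [signedPartitionSum, signedWeight, prod_moment_sum_mul, mul_sum]
  rw [sum_comm]
  exact sum_congr rfl fun κ _ => sum_congr rfl fun σ _ => by ring

end Moment

section UpIndicator

variable {ι Ω : Type*} [LinearOrder Ω]

def upIndicator (k j : Ω) : ℝ := if k ≤ j then 1 else 0

lemma upIndicator_nonneg (k j : Ω) : 0 ≤ upIndicator k j := by
  unfold upIndicator
  split_ifs <;> norm_num

lemma upIndicator_le_one (k j : Ω) : upIndicator k j ≤ 1 := by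
  unfold upIndicator
  split_ifs <;> norm_num

variable [DecidableEq ι] [Fintype Ω]

lemma moment_upIndicator_insert (μ : Ω → ℝ) (κ : ι → Ω) {x : ι} {b : Finset ι}
    (hb : b.Nonempty) (hx : ∀ y ∈ b, κ x ≤ κ y) :
    moment μ (fun i => upIndicator (κ i)) (insert x b) =
      moment μ (fun i => upIndicator (κ i)) b := by
  by_cases hxb : x ∈ b
  · rw [insert_eq_of_mem hxb]
  refine sum_congr rfl fun j _ => congrArg (μ j * ·) ?_
  rw [prod_insert hxb]
  simp only [upIndicator]
  split_ifs with hxj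
  · exact one_mul _
  · obtain ⟨y, hy⟩ := hb
    rw [prod_eq_zero hy (if_neg fun hyj => hxj ((hx y hy).trans hyj)), mul_zero]

lemma signedPartitionSum_moment_upIndicator_nonneg {μ : Ω → ℝ} (hμ0 : ∀ j, 0 ≤ μ j)
    (hμ1 : ∑ j, μ j = 1) (κ : ι → Ω) {s : Finset ι} (hs : s.Nonempty) :
    0 ≤ signedPartitionSum (moment μ fun i => upIndicator (κ i)) s := by
  refine signedPartitionSum_nonneg _ κ (fun x => ?_) (fun x => ?_)
    (fun x b hb hx => moment_upIndicator_insert μ κ hb hx) hs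
  · refine sum_nonneg fun j _ => ?_
    rw [prod_singleton]
    exact mul_nonneg (hμ0 j) (upIndicator_nonneg _ _)
  · refine (sum_le_sum fun j _ => ?_).trans_eq hμ1
    rw [prod_singleton]
    exact mul_le_of_le_one_right (hμ0 j) (upIndicator_le_one _ _)

end UpIndicator

noncomputable def increment {M : ℕ} (f : Fin (M + 1) → ℝ) : Fin (M + 1) → ℝ :=
  Fin.cases (f 0) fun i => f i.succ - f i.castSucc

lemma increment_nonneg {M : ℕ} {f : Fin (M + 1) → ℝ} (hf0 : 0 ≤ f 0) (hf : Monotone f)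
    (k : Fin (M + 1)) : 0 ≤ increment f k := by
  cases k using Fin.cases with
  | zero => exact hf0
  | succ i => exact sub_nonneg.2 (hf (Fin.castSucc_le_succ i))

lemma sum_increment_mul_upIndicator {M : ℕ} (f : Fin (M + 1) → ℝ) (j : Fin (M + 1)) :
    ∑ k, increment f k * upIndicator k j = f j := by
  simp only [upIndicator]
  induction j using Fin.induction with
  | zero =>
    rw [Fintype.sum_eq_single 0 fun k hk => by rw [if_neg (by simpa using hk), mul_zero]]
    simp [increment]
  | succ i ih =>
    have hsplit (k : Fin (M + 1)) : (if k ≤ i.succ then (1 : ℝ) else 0) =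
        (if k ≤ i.castSucc then 1 else 0) + if k = i.succ then 1 else 0 := by
      split_ifs <;> simp_all [Fin.le_def, Fin.ext_iff] <;> omega
    simp only [hsplit, mul_add, sum_add_distrib, ih]
    simp only [mul_ite, mul_one, mul_zero, sum_ite_eq', mem_univ, if_true]
    rw [increment, Fin.cases_succ]
    ring

/-- Let `N ≥ 1`, let `μ` be probability weights on `{1,…,N}`, and let
`f 1, …, f n : {1,…,N} → ℝ` be nonnegative nondecreasing functions.  Then
`E_n(f_1,…,f_n) = ∑_{σ ⊢ [n]} (-1)^{ℓ(σ)+1} (∏_i (|σ_i|-1)!) ∏_i ⟨∏_{s ∈ σ_i} f_s⟩_μ ≥ 0`. -/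
theorem stmt0 (N n : ℕ) (hN : 1 ≤ N) (hn : 1 ≤ n)
    (μ : Fin N → ℝ) (hμ0 : ∀ j, 0 ≤ μ j) (hμ1 : ∑ j, μ j = 1)
    (f : Fin n → Fin N → ℝ) (hf0 : ∀ i j, 0 ≤ f i j) (hfmono : ∀ i, Monotone (f i)) :
    0 ≤ ∑ σ : Finpartition (Finset.univ : Finset (Fin n)),
        (-1 : ℝ) ^ (σ.parts.card + 1) *
          (∏ b ∈ σ.parts, ((b.card - 1).factorial : ℝ)) *
          ∏ b ∈ σ.parts, (∑ j, μ j * ∏ s ∈ b, f s j) := by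
  obtain ⟨M, rfl⟩ : ∃ M, N = M + 1 := ⟨N - 1, by omega⟩
  have hf : f = fun i j => ∑ k, increment (f i) k * upIndicator k j :=
    funext₂ fun i j => (sum_increment_mul_upIndicator (f i) j).symm
  change 0 ≤ signedPartitionSum (moment μ f) univ
  rw [hf, signedPartitionSum_moment_sum_mul]
  exact sum_nonneg fun κ _ => mul_nonneg
    (prod_nonneg fun i _ => increment_nonneg (hf0 i 0) (hfmono i) (κ i))
    (signedPartitionSum_moment_upIndicator_nonneg hμ0 hμ1 κ ⟨⟨0, hn⟩, mem_univ _⟩)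
end

section
/- Let N ≥ 1, n ≥ 1, and let μ(1),…,μ(N) be arbitrary real numbers. For any functions f_1,…,f_n : {1,…,N} → ℝ one has the multilinear expansion E_n(f_1,…,f_n) = Σ_{g : {1,…,n} → {1,…,N}} F_{m(g)}(μ) · ∏_{s=1}^n f_s(g(s)), where for g : {1,…,n} → {1,…,N} one sets m_j(g) = |g^{−1}(j)| for 1 ≤ j ≤ N, and F_{m_1,…,m_N}(μ) = −∏_{j=1}^N ∏_{i=1}^{m_j} (i − 1 − μ(j)). -/
/-!
Expanding every factor `⟨∏_{s ∈ b} f_s⟩_μ = ∑_j μ(j) ∏_{s ∈ b} f_s(j)` turns `E_n` into a sum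
over set partitions whose blocks carry colours `j ∈ {1, …, N}`. Recording the colour of every
point as a map `g : [n] → [N]`, a coloured partition is the same as a map `g` together with a
partition of each fibre of `g`, so the coefficient of `∏_s f_s(g s)` factors over the fibres.
After absorbing the sign `(-1)^{ℓ+1}` into the blocks, a block of colour `j` has weight
`(|b| - 1)! · (-μ(j))`, and for every `x` the sum over the partitions of an `m`-set of
`∏_b (|b| - 1)! · x` is the rising factorial `x (x + 1) ⋯ (x + m - 1)` (it counts permutations
by their cycles); at `x = -μ(j)` this is `∏_{i=1}^{m} (i - 1 - μ(j))`. The rising factorial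
identity follows by splitting off the block containing a chosen element.
-/

open Finset
open scoped Nat

variable {R : Type*} [CommSemiring R]

theorem mul_sum_descFactorial_mul_prod_range (x : R) (m : ℕ) :
    x * ∑ k ∈ range (m + 1), (m.descFactorial k : R) * ∏ i ∈ range (m - k), (x + i)
      = ∏ i ∈ range (m + 1), (x + i) := by
  induction m with
  | zero => simp
  | succ m ih =>
    rw [sum_range_succ', prod_range_succ]
    simp_rw [Nat.succ_descFactorial_succ, Nat.add_sub_add_right, Nat.descFactorial_zero,
      Nat.sub_zero]
    push_cast
    rw [← ih]
    simp_rw [mul_assoc, ← mul_sum]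
    ring

theorem sum_range_choose_smul_factorial_mul_prod_range (x : R) (m : ℕ) :
    ∑ k ∈ range (m + 1), m.choose k • (k ! * x * ∏ i ∈ range (m - k), (x + i))
      = ∏ i ∈ range (m + 1), (x + i) := by
  rw [← mul_sum_descFactorial_mul_prod_range, mul_sum]
  refine sum_congr rfl fun k _ => ?_
  rw [Nat.descFactorial_eq_factorial_mul_choose, nsmul_eq_mul]
  push_cast
  ring

namespace Finpartition

variable {α : Type*} [DecidableEq α]

theorem parts_avoid_of_mem {s b : Finset α} (P : Finpartition s) (hb : b ∈ P.parts) :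
    (P.avoid b).parts = P.parts.erase b := by
  ext c
  rw [mem_avoid, mem_erase]
  constructor
  · rintro ⟨d, hd, hdb, rfl⟩
    have hne : d ≠ b := by rintro rfl; exact hdb le_rfl
    have hdisj : Disjoint d b := P.disjoint hd hb hne
    rw [sdiff_eq_left.2 hdisj]
    exact ⟨hne, hd⟩
  · rintro ⟨hne, hc⟩
    have hdisj : Disjoint c b := P.disjoint hc hb hne
    exact ⟨c, hc, fun hle => P.ne_bot hc (hdisj.eq_bot_of_le hle), sdiff_eq_left.2 hdisj⟩

theorem prod_parts_prod {M : Type*} [CommMonoid M] {s : Finset α} (P : Finpartition s)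
    (f : α → M) : ∏ b ∈ P.parts, ∏ x ∈ b, f x = ∏ x ∈ s, f x := by
  conv_rhs => rw [← P.biUnion_parts]
  exact (prod_biUnion P.supIndep.pairwiseDisjoint).symm

theorem sum_prod_parts_filter_part_eq {s b : Finset α} {a : α} (ha : a ∈ b) (hb : b ⊆ s)
    (W : Finset α → R) :
    ∑ P : Finpartition s with P.part a = b, ∏ c ∈ P.parts, W c
      = W b * ∑ Q : Finpartition (s \ b), ∏ c ∈ Q.parts, W c := by
  have hb₀ : b ≠ ⊥ := ne_empty_of_mem ha
  rw [mul_sum]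
  refine sum_nbij' (·.avoid b) (·.extend hb₀ sdiff_disjoint (sdiff_sup_cancel hb))
    (fun _ _ => mem_univ _) ?_ ?_ ?_ ?_
  · exact fun Q _ => mem_filter.2 ⟨mem_univ _, part_eq_of_mem _ (by simp) ha⟩
  · intro P hP
    obtain rfl := (mem_filter.1 hP).2
    ext c
    rw [extend_parts, parts_avoid_of_mem _ (P.part_mem.2 (hb ha)),
      insert_erase (P.part_mem.2 (hb ha))]
  · intro Q _
    have hbQ : b ∉ Q.parts := fun h => hb₀ (disjoint_self.1 (sdiff_disjoint.mono_left (Q.le h)))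
    ext c
    rw [parts_avoid_of_mem _ (by simp), extend_parts, erase_insert hbQ]
  · intro P hP
    obtain rfl := (mem_filter.1 hP).2
    rw [parts_avoid_of_mem _ (P.part_mem.2 (hb ha)), mul_prod_erase _ _ (P.part_mem.2 (hb ha))]

theorem sum_prod_parts_insert {s : Finset α} {a : α} (ha : a ∉ s) (W : Finset α → R) :
    ∑ P : Finpartition (insert a s), ∏ c ∈ P.parts, W c
      = ∑ t ∈ s.powerset,
          W (insert a t) * ∑ Q : Finpartition (s \ t), ∏ c ∈ Q.parts, W c := by
  have hmaps : ∀ P ∈ (univ : Finset (Finpartition (insert a s))),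
      (P.part a).erase a ∈ s.powerset := fun P _ => mem_powerset.2 fun x hx =>
    (mem_insert.1 (P.part_subset a (mem_of_mem_erase hx))).resolve_left (ne_of_mem_erase hx)
  rw [← sum_fiberwise_of_maps_to hmaps]
  refine sum_congr rfl fun t ht => ?_
  have hat : a ∉ t := fun h => ha (mem_powerset.1 ht h)
  have hfib : ∀ P : Finpartition (insert a s), (P.part a).erase a = t ↔ P.part a = insert a t :=
    fun P => ⟨fun h => by rw [← h, insert_erase (P.mem_part (mem_insert_self a s))],
      fun h => by rw [h, erase_insert hat]⟩
  simp_rw [hfib]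
  rw [sum_prod_parts_filter_part_eq (mem_insert_self a t)
      (insert_subset_insert a (mem_powerset.1 ht)),
    insert_sdiff_insert, sdiff_insert_of_notMem ha]

theorem sum_prod_parts_factorial_mul (x : R) (s : Finset α) :
    ∑ P : Finpartition s, ∏ b ∈ P.parts, ((#b - 1)! * x) = ∏ i ∈ range #s, (x + i) := by
  induction s using Finset.strongInduction with
  | H s ih =>
  rcases s.eq_empty_or_nonempty with rfl | ⟨a, ha⟩
  · -- the `Unique` instance is stated for `⊥`, which `∅` is only up to unfolding
    let _ : Unique (Finpartition (∅ : Finset α)) :=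
      inferInstanceAs (Unique (Finpartition (⊥ : Finset α)))
    rw [Fintype.sum_unique, parts_eq_empty_iff.2 rfl, prod_empty, card_empty, prod_range_zero]
  rw [← insert_erase ha, sum_prod_parts_insert (notMem_erase a s),
    card_insert_of_notMem (notMem_erase a s)]
  have hterm : ∀ t ∈ (s.erase a).powerset,
      (#(insert a t) - 1)! * x *
          ∑ Q : Finpartition (s.erase a \ t), ∏ b ∈ Q.parts, ((#b - 1)! * x) =
        (#t)! * x * ∏ i ∈ range (#(s.erase a) - #t), (x + i) := by
    intro t ht
    have hts := mem_powerset.1 ht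
    rw [ih _ (sdiff_subset.trans_ssubset (erase_ssubset ha)), card_sdiff_of_subset hts,
      card_insert_of_notMem (fun h => notMem_erase a s (hts h)), Nat.add_sub_cancel]
  rw [sum_congr rfl hterm,
    sum_powerset_apply_card fun k => k ! * x * ∏ i ∈ range (#(s.erase a) - k), (x + i),
    sum_range_choose_smul_factorial_mul_prod_range]

theorem sum_prod_parts_factorial_mul_mul_prod (x : R) (s : Finset α) (F : α → R) :
    ∑ P : Finpartition s, ∏ b ∈ P.parts, ((#b - 1)! * x * ∏ y ∈ b, F y)
      = (∏ i ∈ range #s, (x + i)) * ∏ y ∈ s, F y := by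
  rw [sum_congr rfl fun P _ => by rw [prod_mul_distrib, prod_parts_prod], ← sum_mul,
    sum_prod_parts_factorial_mul]

variable {β : Type*}

def IsConstOnParts {s : Finset α} (P : Finpartition s) (g : α → β) : Prop :=
  ∀ b ∈ P.parts, ∀ x ∈ b, ∀ y ∈ b, g x = g y

instance {s : Finset α} (P : Finpartition s) (g : α → β) [DecidableEq β] :
    Decidable (P.IsConstOnParts g) := by
  unfold IsConstOnParts; infer_instance

variable [Fintype α] {P : Finpartition (univ : Finset α)}

def liftParts (P : Finpartition (univ : Finset α)) (h : P.parts → β) : α → β :=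
  fun x => h ⟨P.part x, P.part_mem.2 (mem_univ x)⟩

theorem liftParts_of_mem {h : P.parts → β} {b : P.parts} {x : α} (hx : x ∈ b.1) :
    P.liftParts h x = h b :=
  congrArg h (Subtype.ext (P.part_eq_of_mem b.2 hx))

theorem isConstOnParts_liftParts (h : P.parts → β) : P.IsConstOnParts (P.liftParts h) :=
  fun b hb _ hx _ hy => (liftParts_of_mem (b := ⟨b, hb⟩) hx).trans (liftParts_of_mem hy).symm

variable [DecidableEq β] {g : α → β}

theorem IsConstOnParts.sup_filter_subset_fiber (hP : P.IsConstOnParts g) (j : β) :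
    (P.parts.filter (· ⊆ ({x | g x = j} : Finset α))).sup id = ({x | g x = j} : Finset α) := by
  refine le_antisymm (Finset.sup_le fun b hb => (mem_filter.1 hb).2) fun x hx => ?_
  have hpart := P.part_mem.2 (mem_univ x)
  have hsub : P.part x ⊆ ({y | g y = j} : Finset α) := fun y hy =>
    mem_filter.2 ⟨mem_univ y, (hP _ hpart y hy x (P.mem_part (mem_univ x))).trans
      (mem_filter.1 hx).2⟩
  exact le_sup (f := id) (mem_filter.2 ⟨hpart, hsub⟩) (P.mem_part (mem_univ x))

theorem subset_fiber_liftParts_iff (h : P.parts → β) (b : P.parts) (j : β) :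
    b.1 ⊆ ({x | P.liftParts h x = j} : Finset α) ↔ h b = j := by
  obtain ⟨x₀, hx₀⟩ := P.nonempty_of_mem_parts b.2
  refine ⟨fun hsub => ?_, fun hbj x hx => mem_filter.2 ⟨mem_univ x, ?_⟩⟩
  · rw [← liftParts_of_mem (h := h) hx₀]
    exact (mem_filter.1 (hsub hx₀)).2
  · rw [liftParts_of_mem hx, hbj]

variable [Fintype β]

theorem prod_sum_eq_sum_isConstOnParts (P : Finpartition (univ : Finset α))
    (w : Finset α → β → R) :
    ∏ b ∈ P.parts, ∑ j, w b j
      = ∑ g : α → β with P.IsConstOnParts g,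
          ∏ j, ∏ b ∈ P.parts with b ⊆ ({x | g x = j} : Finset α), w b j := by
  rw [← prod_coe_sort P.parts, Fintype.prod_sum]
  have hpick : ∀ b : P.parts, (P.nonempty_of_mem_parts b.2).choose ∈ b.1 :=
    fun b => (P.nonempty_of_mem_parts b.2).choose_spec
  refine sum_nbij' P.liftParts (fun g b => g (P.nonempty_of_mem_parts b.2).choose)
    (fun h _ => mem_filter.2 ⟨mem_univ _, isConstOnParts_liftParts h⟩) (fun _ _ => mem_univ _)
    (fun h _ => funext fun b => liftParts_of_mem (hpick b)) ?_ ?_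
  · intro g hg
    funext x
    exact (mem_filter.1 hg).2 _ (P.part_mem.2 (mem_univ x)) _ (hpick _) _ (P.mem_part (mem_univ x))
  · intro h _
    rw [← prod_fiberwise univ h]
    refine prod_congr rfl fun j _ => ?_
    rw [prod_filter, prod_filter, ← prod_coe_sort P.parts]
    refine prod_congr rfl fun b _ => ?_
    by_cases hbj : h b = j
    · rw [if_pos hbj, if_pos ((subset_fiber_liftParts_iff h b j).2 hbj), hbj]
    · rw [if_neg hbj, if_neg (mt (subset_fiber_liftParts_iff h b j).1 hbj)]

def ofFibers (g : α → β) (Q : ∀ j, Finpartition ({x | g x = j} : Finset α)) :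
    Finpartition (univ : Finset α) :=
  (combine Q (supIndep_iff_pairwiseDisjoint.2
    (Set.pairwiseDisjoint_filter g ↑(univ : Finset β) univ))).copy (by ext x; simp)

theorem parts_ofFibers (g : α → β) (Q : ∀ j, Finpartition ({x | g x = j} : Finset α)) :
    (ofFibers g Q).parts = univ.biUnion fun j => (Q j).parts := rfl

theorem isConstOnParts_ofFibers (Q : ∀ j, Finpartition ({x | g x = j} : Finset α)) :
    (ofFibers g Q).IsConstOnParts g := by
  intro b hb x hx y hy
  obtain ⟨j, -, hbj⟩ := mem_biUnion.1 hb
  rw [(mem_filter.1 ((Q j).le hbj hx)).2, (mem_filter.1 ((Q j).le hbj hy)).2]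

theorem filter_subset_fiber_ofFibers (Q : ∀ j, Finpartition ({x | g x = j} : Finset α))
    (j : β) :
    (ofFibers g Q).parts.filter (· ⊆ ({x | g x = j} : Finset α)) = (Q j).parts := by
  ext b
  rw [mem_filter, parts_ofFibers, mem_biUnion]
  constructor
  · rintro ⟨⟨k, -, hbk⟩, hbj⟩
    obtain ⟨x, hx⟩ := (Q k).nonempty_of_mem_parts hbk
    obtain rfl : k = j :=
      (mem_filter.1 ((Q k).le hbk hx)).2.symm.trans (mem_filter.1 (hbj hx)).2
    exact hbk
  · exact fun hb => ⟨⟨j, mem_univ j, hb⟩, (Q j).le hb⟩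

theorem IsConstOnParts.biUnion_filter_subset_fiber (hP : P.IsConstOnParts g) :
    univ.biUnion (fun j => P.parts.filter (· ⊆ ({x | g x = j} : Finset α))) = P.parts := by
  ext b
  simp only [mem_biUnion, mem_univ, true_and, mem_filter, exists_and_left, and_iff_left_iff_imp]
  intro hb
  obtain ⟨x, hx⟩ := P.nonempty_of_mem_parts hb
  exact ⟨g x, fun y hy => mem_filter.2 ⟨mem_univ y, hP b hb y hy x hx⟩⟩

theorem sum_isConstOnParts_eq_prod_sum (g : α → β) (w : Finset α → β → R) :
    ∑ P : Finpartition (univ : Finset α) with P.IsConstOnParts g,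
        ∏ j, ∏ b ∈ P.parts with b ⊆ ({x | g x = j} : Finset α), w b j
      = ∏ j, ∑ Q : Finpartition ({x | g x = j} : Finset α), ∏ b ∈ Q.parts, w b j := by
  rw [Fintype.prod_sum]
  refine sum_bij'
    (fun P hP j => P.ofSubset (filter_subset _ _) ((mem_filter.1 hP).2.sup_filter_subset_fiber j))
    (fun Q _ => ofFibers g Q) (fun _ _ => mem_univ _)
    (fun Q _ => mem_filter.2 ⟨mem_univ _, isConstOnParts_ofFibers Q⟩) ?_ ?_ (fun _ _ => rfl)
  · exact fun P hP => Finpartition.ext (mem_filter.1 hP).2.biUnion_filter_subset_fiber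
  · exact fun Q _ => funext fun j => Finpartition.ext (filter_subset_fiber_ofFibers Q j)

theorem sum_prod_parts_sum_eq_sum_prod_sum (w : Finset α → β → R) :
    ∑ P : Finpartition (univ : Finset α), ∏ b ∈ P.parts, ∑ j, w b j
      = ∑ g : α → β,
          ∏ j, ∑ Q : Finpartition ({x | g x = j} : Finset α), ∏ b ∈ Q.parts, w b j := by
  simp_rw [prod_sum_eq_sum_isConstOnParts, ← sum_isConstOnParts_eq_prod_sum]
  exact sum_comm' fun _ _ => by simp

end Finpartition

theorem stmt1_general (N n : ℕ)
    (μ : Fin N → ℝ) (f : Fin n → Fin N → ℝ) :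
    (∑ σ : Finpartition (Finset.univ : Finset (Fin n)),
        (-1 : ℝ) ^ (σ.parts.card + 1) *
          (∏ b ∈ σ.parts, ((b.card - 1).factorial : ℝ)) *
          ∏ b ∈ σ.parts, (∑ j, μ j * ∏ s ∈ b, f s j))
      = ∑ g : Fin n → Fin N,
          (-(∏ j : Fin N, ∏ i ∈ Finset.range ((Finset.univ.filter fun s => g s = j).card),
              ((i : ℝ) - μ j))) * ∏ s : Fin n, f s (g s) := by
  have hsign : ∀ σ : Finpartition (univ : Finset (Fin n)),
      (-1 : ℝ) ^ (#σ.parts + 1) * (∏ b ∈ σ.parts, ((#b - 1)! : ℝ)) *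
          ∏ b ∈ σ.parts, ∑ j, μ j * ∏ s ∈ b, f s j
        = -∏ b ∈ σ.parts, ∑ j, (#b - 1)! * -μ j * ∏ s ∈ b, f s j := by
    intro σ
    have hblock : ∀ b : Finset (Fin n), ∑ j, (#b - 1)! * -μ j * ∏ s ∈ b, f s j
        = -1 * (#b - 1)! * ∑ j, μ j * ∏ s ∈ b, f s j := fun b => by
      rw [mul_sum]
      exact sum_congr rfl fun j _ => by ring
    simp only [hblock, prod_mul_distrib, prod_const]
    ring
  have hfibres : ∀ g : Fin n → Fin N,
      ∏ j, ∏ s ∈ ({s | g s = j} : Finset (Fin n)), f s j = ∏ s, f s (g s) := fun g => by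
    rw [← prod_fiberwise univ g fun s => f s (g s)]
    exact prod_congr rfl fun j _ => prod_congr rfl fun s hs => by rw [(mem_filter.1 hs).2]
  rw [sum_congr rfl fun σ _ => hsign σ, sum_neg_distrib,
    Finpartition.sum_prod_parts_sum_eq_sum_prod_sum, ← sum_neg_distrib]
  refine sum_congr rfl fun g _ => ?_
  simp_rw [Finpartition.sum_prod_parts_factorial_mul_mul_prod, prod_mul_distrib, hfibres,
    neg_add_eq_sub, neg_mul]

/-- Multilinear expansion of `E_n`: for arbitrary real weights `μ` and
arbitrary functions `f_1,…,f_n : {1,…,N} → ℝ`,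
`E_n(f_1,…,f_n) = ∑_{g : [n] → [N]} F_{m(g)}(μ) ∏_s f_s(g(s))`, where `m_j(g) = |g⁻¹(j)|`
and `F_{m_1,…,m_N}(μ) = -∏_{j=1}^N ∏_{i=1}^{m_j} (i - 1 - μ(j))`. -/
theorem stmt1 (N n : ℕ) (hN : 1 ≤ N) (hn : 1 ≤ n)
    (μ : Fin N → ℝ) (f : Fin n → Fin N → ℝ) :
    (∑ σ : Finpartition (Finset.univ : Finset (Fin n)),
        (-1 : ℝ) ^ (σ.parts.card + 1) *
          (∏ b ∈ σ.parts, ((b.card - 1).factorial : ℝ)) *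
          ∏ b ∈ σ.parts, (∑ j, μ j * ∏ s ∈ b, f s j))
      = ∑ g : Fin n → Fin N,
          (-(∏ j : Fin N, ∏ i ∈ Finset.range ((Finset.univ.filter fun s => g s = j).card),
              ((i : ℝ) - μ j))) * ∏ s : Fin n, f s (g s) :=
  stmt1_general N n μ f
end

section
/- Let N ≥ 1, let m_1,…,m_N be nonnegative integers, and let μ(1),…,μ(N) be real numbers. Then Σ over all arrays (k_{i,j})_{i≥1, 1≤j≤N} of nonnegative integers satisfying Σ_{i≥1} i·k_{i,j} = m_j for every j, of the quantity (−1)^{(Σ_{j=1}^N κ_j) − 1} · (∏_{j=1}^N μ(j)^{κ_j}) · (∏_{j=1}^N m_j!) / (∏_{j=1}^N ∏_{i≥1} i^{k_{i,j}} · k_{i,j}!), where κ_j = Σ_{i≥1} k_{i,j}, equals −∏_{j=1}^N ∏_{i=1}^{m_j} (i − 1 − μ(j)). (In each array only finitely many k_{i,j} are nonzero, namely k_{i,j} = 0 whenever i > m_j, so the sum and products are finite.) -/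
/-!
Writing `k i` for the number of cycles of length `i + 1`, `m! / ∏ (i+1)^(k i) (k i)!` counts
the permutations of `m` letters of cycle type `k`, so for a single column the sum is
`∑_σ x ^ (#cycles σ) = x (x + 1) ⋯ (x + m - 1)` at `x = -μ(j)`. We prove this column identity
through the recursion `m T_m = x ∑_{r<m} T_r` for `T_m = ∑_k x^(∑ k) / ∏ (i+1)^(k i) (k i)!`,
obtained by splitting `m = ∑ (i+1) k i` and removing one cycle of length `i + 1`; it telescopes
to `(m + 1) T_(m+1) = (x + m) T_m`. The sum over arrays is the product over `j` of the column
sums, and the sign `(-1)^(∑ κ_j - 1)` turns each `μ(j)` into `-μ(j)` up to one overall minus.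
-/

open Finset

namespace CycleType

variable {K : Type*} [Field K] {M : ℕ}

/-- `k i` is the number of cycles of length `i + 1`; only lengths up to `M` are represented. -/
def weight (k : Fin M → ℕ) : ℕ := ∑ i : Fin M, ((i : ℕ) + 1) * k i

theorem weight_add_single (k : Fin M → ℕ) (i : Fin M) :
    weight (k + Pi.single i 1) = weight k + (i + 1) := by
  simp [weight, mul_add, sum_add_distrib, Pi.single_apply]

theorem mul_apply_le_weight (k : Fin M → ℕ) (i : Fin M) : ((i : ℕ) + 1) * k i ≤ weight k :=
  single_le_sum (f := fun j : Fin M => ((j : ℕ) + 1) * k j) (fun _ _ => Nat.zero_le _) (mem_univ i)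

theorem apply_le_weight (k : Fin M → ℕ) (i : Fin M) : k i ≤ weight k :=
  (Nat.le_mul_of_pos_left _ i.val.succ_pos).trans (mul_apply_le_weight k i)

def ofSize (M m : ℕ) : Finset (Fin M → ℕ) :=
  (Fintype.piFinset fun _ => range (m + 1)).filter fun k => weight k = m

theorem mem_ofSize {m : ℕ} {k : Fin M → ℕ} : k ∈ ofSize M m ↔ weight k = m := by
  refine ⟨fun h => (mem_filter.1 h).2, fun h => mem_filter.2 ⟨?_, h⟩⟩
  exact Fintype.mem_piFinset.2 fun i => mem_range.2 (Nat.lt_succ_of_le (h ▸ apply_le_weight k i))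

theorem ofSize_zero : ofSize M 0 = {0} := by
  ext k
  simp [mem_ofSize, weight, funext_iff]

theorem filter_piFinset_eq_piFinset_ofSize {ι : Type*} [Fintype ι] [DecidableEq ι]
    (m : ι → ℕ) (hm : ∀ j, m j ≤ M) :
    ((Fintype.piFinset fun _ : ι => Fintype.piFinset fun _ : Fin M => range (M + 1)).filter
      fun k => ∀ j, ∑ i : Fin M, ((i : ℕ) + 1) * k j i = m j) =
      Fintype.piFinset fun j => ofSize M (m j) := by
  ext k
  simp only [mem_filter, Fintype.mem_piFinset, mem_ofSize, mem_range, weight]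
  exact ⟨And.right, fun h => ⟨fun j i => Nat.lt_succ_of_le
    ((apply_le_weight (k j) i).trans ((h j).trans_le (hm j))), h⟩⟩

/-- The order of the centralizer in `S_(weight k)` of a permutation of cycle type `k`. -/
noncomputable def denom (k : Fin M → ℕ) : K :=
  ∏ i : Fin M, (((i : ℕ) + 1 : K) ^ (k i) * ((k i).factorial : K))

theorem denom_ne_zero [CharZero K] (k : Fin M → ℕ) : (denom k : K) ≠ 0 :=
  prod_ne_zero_iff.2 fun i _ => mul_ne_zero (pow_ne_zero _ (by norm_cast))
    (by exact_mod_cast (k i).factorial_ne_zero)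

theorem denom_add_single (k : Fin M → ℕ) (i : Fin M) :
    (denom (k + Pi.single i 1) : K) = ((i : ℕ) + 1) * (k i + 1) * denom k := by
  rw [denom, denom, ← Fintype.prod_ite_eq' i (fun _ => ((i : ℕ) + 1 : K) * (k i + 1)),
    ← prod_mul_distrib]
  refine prod_congr rfl fun j _ => ?_
  rcases eq_or_ne j i with rfl | hji
  · simp only [Pi.add_apply, Pi.single_eq_same, if_true, pow_succ, Nat.factorial_succ]
    push_cast
    ring
  · simp [hji]

/-- The cycle index of `S_m` with every power sum specialised to `x`. -/
noncomputable def indexSum (M m : ℕ) (x : K) : K :=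
  ∑ k ∈ ofSize M m, x ^ (∑ i, k i) / denom k

theorem indexSum_zero (x : K) : indexSum M 0 x = 1 := by
  simp [indexSum, ofSize_zero, denom]

/-- Removing one cycle of length `i + 1` is the bijection `k ↦ k - Pi.single i 1` onto
`ofSize M (m - (i + 1))`, and the factor `(i + 1) * k i` cancels against `denom`. -/
theorem sum_ofSize_mul_apply [CharZero K] {m : ℕ} (x : K) (i : Fin M) (hi : (i : ℕ) + 1 ≤ m) :
    ∑ k ∈ ofSize M m, ((i : ℕ) + 1 : K) * k i * (x ^ (∑ j, k j) / denom k)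
      = x * indexSum M (m - (i + 1)) x := by
  rw [indexSum, mul_sum]
  symm
  refine sum_of_injOn (· + Pi.single i 1) (add_left_injective _).injOn (fun c hc => ?_)
    (fun k hk hk' => ?_) (fun c _ => ?_)
  · rw [mem_coe, mem_ofSize] at hc ⊢
    rw [weight_add_single]
    omega
  · suffices k i = 0 by simp [this]
    by_contra hki
    have hk_eq : k - Pi.single i 1 + Pi.single i 1 = k := tsub_add_cancel_of_le fun j => by
      rcases eq_or_ne j i with rfl | hji <;> simp [*]; omega
    refine hk' ⟨k - Pi.single i 1, ?_, hk_eq⟩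
    rw [mem_coe, mem_ofSize]
    rw [mem_ofSize] at hk
    have := weight_add_single (k - Pi.single i 1) i
    rw [hk_eq] at this
    omega
  · have hsum : ∑ j, (c + Pi.single i 1 : Fin M → ℕ) j = ∑ j, c j + 1 := by
      simp [sum_add_distrib]
    have hc := denom_ne_zero (K := K) c
    have hi : ((i : ℕ) + 1 : K) * (c i + 1) ≠ 0 := by norm_cast
    rw [hsum, denom_add_single, Pi.add_apply, Pi.single_eq_same]
    push_cast
    field_simp
    ring

theorem sum_ofSize_mul_apply_of_lt [CharZero K] {m : ℕ} (x : K) (i : Fin M)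
    (hi : m < (i : ℕ) + 1) :
    ∑ k ∈ ofSize M m, ((i : ℕ) + 1 : K) * k i * (x ^ (∑ j, k j) / denom k) = 0 := by
  refine sum_eq_zero fun k hk => ?_
  suffices k i = 0 by simp [this]
  have := mul_apply_le_weight k i
  rw [mem_ofSize.1 hk] at this
  nlinarith

theorem natCast_mul_indexSum [CharZero K] {m : ℕ} (x : K) (hm : m ≤ M) :
    m * indexSum M m x = x * ∑ r ∈ range m, indexSum M r x := by
  have hweight : ∀ k ∈ ofSize M m, (m : K) = ∑ i : Fin M, ((i : ℕ) + 1 : K) * k i :=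
    fun k hk => by
      rw [← mem_ofSize.1 hk, weight]
      push_cast
      rfl
  calc (m : K) * indexSum M m x
      = ∑ i : Fin M, ∑ k ∈ ofSize M m,
          ((i : ℕ) + 1 : K) * k i * (x ^ (∑ j, k j) / denom k) := by
        rw [indexSum, mul_sum, sum_comm]
        refine sum_congr rfl fun k hk => ?_
        rw [hweight k hk, sum_mul]
    _ = ∑ i ∈ range M, if i + 1 ≤ m then x * indexSum M (m - (i + 1)) x else 0 := by
        rw [← Fin.sum_univ_eq_sum_range
          (fun i => if i + 1 ≤ m then x * indexSum M (m - (i + 1)) x else 0)]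
        refine sum_congr rfl fun i _ => ?_
        split_ifs with hi
        · exact sum_ofSize_mul_apply x i hi
        · exact sum_ofSize_mul_apply_of_lt x i (by omega)
    _ = ∑ i ∈ range m, x * indexSum M (m - 1 - i) x := by
        rw [← sum_filter]
        refine sum_congr ?_ fun i _ => by rw [Nat.sub_sub, add_comm 1 i]
        ext i
        simp only [mem_filter, mem_range]
        omega
    _ = x * ∑ r ∈ range m, indexSum M r x := by
        rw [mul_sum, sum_range_reflect (fun r => x * indexSum M r x)]

theorem natCast_succ_mul_indexSum_succ [CharZero K] {m : ℕ} (x : K) (hm : m + 1 ≤ M) :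
    ((m : K) + 1) * indexSum M (m + 1) x = (x + m) * indexSum M m x := by
  have h_succ := natCast_mul_indexSum x hm
  have h := natCast_mul_indexSum x (Nat.le_of_succ_le hm)
  rw [sum_range_succ] at h_succ
  push_cast at h_succ
  linear_combination h_succ - h

theorem factorial_mul_indexSum [CharZero K] {m : ℕ} (x : K) (hm : m ≤ M) :
    (m.factorial : K) * indexSum M m x = ∏ i ∈ range m, (x + i) := by
  induction m with
  | zero => simp [indexSum_zero]
  | succ m ih =>
    rw [Nat.factorial_succ, Nat.cast_mul, prod_range_succ, ← ih (by omega), Nat.cast_succ,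
      mul_comm ((m : K) + 1), mul_assoc, natCast_succ_mul_indexSum_succ x hm]
    ring

end CycleType

theorem neg_one_zpow_mul_prod_div {K ι : Type*} [Field K] [Fintype ι] (a c d : ι → K)
    (κ : ι → ℕ) :
    (-1 : K) ^ ((∑ j, (κ j : ℤ)) - 1) * (∏ j, a j ^ κ j) * (∏ j, c j) / ∏ j, d j
      = -∏ j, c j * ((-a j) ^ κ j / d j) := by
  rw [zpow_sub₀ (by norm_num), zpow_one, ← Nat.cast_sum, zpow_natCast, ← prod_pow_eq_pow_sum]
  simp only [neg_pow (a _), prod_mul_distrib, prod_div_distrib]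
  ring

open CycleType in
theorem stmt2_general (N : ℕ) (m : Fin N → ℕ) (μ : Fin N → ℝ) :
    (∑ k ∈ (Fintype.piFinset fun _ : Fin N =>
          Fintype.piFinset fun _ : Fin (∑ j, m j) => Finset.range ((∑ j, m j) + 1)).filter
        (fun k : Fin N → Fin (∑ j, m j) → ℕ =>
          ∀ j : Fin N, ∑ i : Fin (∑ j, m j), ((i : ℕ) + 1) * k j i = m j),
        (-1 : ℝ) ^ ((∑ j : Fin N, ∑ i : Fin (∑ j, m j), (k j i : ℤ)) - 1) *
          (∏ j : Fin N, μ j ^ (∑ i : Fin (∑ j, m j), k j i)) *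
          (∏ j : Fin N, ((m j).factorial : ℝ)) /
          ∏ j : Fin N, ∏ i : Fin (∑ j, m j),
            (((i : ℕ) + 1 : ℝ) ^ (k j i) * ((k j i).factorial : ℝ)))
      = -∏ j : Fin N, ∏ i ∈ Finset.range (m j), ((i : ℝ) - μ j) := by
  have hm : ∀ j, m j ≤ ∑ j, m j := fun j => single_le_sum (fun _ _ => Nat.zero_le _) (mem_univ j)
  calc _ = ∑ k ∈ Fintype.piFinset fun j => ofSize (∑ j, m j) (m j),
        -∏ j, ((m j).factorial : ℝ) * ((-μ j) ^ (∑ i, k j i) / denom (k j)) := by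
        -- `convert`: the filter's decidability instance is `Nat.decidableForallFin`, not the
        -- `Fintype` one of the general lemma
        refine sum_congr (by convert filter_piFinset_eq_piFinset_ofSize m hm) fun k _ => ?_
        rw [← neg_one_zpow_mul_prod_div]
        push_cast
        rfl
    _ = -∏ j, ((m j).factorial : ℝ) * indexSum (∑ j, m j) (m j) (-μ j) := by
        simp only [indexSum, mul_sum]
        rw [prod_univ_sum, sum_neg_distrib]
    _ = _ := by
        simp only [factorial_mul_indexSum _ (hm _), neg_add_eq_sub]

/-- For real numbers `μ(1),…,μ(N)` and nonnegative integers `m_1,…,m_N`,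
`∑_{(k_{i,j}) : ∑_i i·k_{i,j} = m_j ∀j} (-1)^{∑_j κ_j - 1} (∏_j μ(j)^{κ_j}) (∏_j m_j!) /
 (∏_j ∏_i i^{k_{i,j}} k_{i,j}!) = -∏_{j=1}^N ∏_{i=1}^{m_j} (i - 1 - μ(j))`,
where `κ_j = ∑_i k_{i,j}`.  In any such array `k_{i,j} = 0` for `i > m_j` and
`k_{i,j} ≤ m_j`, so the arrays are faithfully encoded as functions
`Fin N → Fin M → ℕ` with `M = ∑ m_j` (the index `i : Fin M` standing for `i+1 ∈ {1,…,M}`)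
with all values at most `M`. -/
theorem stmt2 (N : ℕ) (hN : 1 ≤ N) (m : Fin N → ℕ) (μ : Fin N → ℝ) :
    (∑ k ∈ (Fintype.piFinset fun _ : Fin N =>
          Fintype.piFinset fun _ : Fin (∑ j, m j) => Finset.range ((∑ j, m j) + 1)).filter
        (fun k : Fin N → Fin (∑ j, m j) → ℕ =>
          ∀ j : Fin N, ∑ i : Fin (∑ j, m j), ((i : ℕ) + 1) * k j i = m j),
        (-1 : ℝ) ^ ((∑ j : Fin N, ∑ i : Fin (∑ j, m j), (k j i : ℤ)) - 1) *
          (∏ j : Fin N, μ j ^ (∑ i : Fin (∑ j, m j), k j i)) *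
          (∏ j : Fin N, ((m j).factorial : ℝ)) /
          ∏ j : Fin N, ∏ i : Fin (∑ j, m j),
            (((i : ℕ) + 1 : ℝ) ^ (k j i) * ((k j i).factorial : ℝ)))
      = -∏ j : Fin N, ∏ i ∈ Finset.range (m j), ((i : ℝ) - μ j) :=
  stmt2_general N m μ
end

section
/- Let N ≥ 1, let μ be probability weights on {1,…,N}, and let m_1,…,m_N be nonnegative integers with n = m_1+⋯+m_N ≥ 1. Define B(m_1,…,m_N) = −Σ over all tuples (i_1,…,i_{N−1}) of nonnegative integers satisfying i_j ≤ (m_1+⋯+m_j) − (i_1+⋯+i_{j−1}) for each 1 ≤ j ≤ N−1, of [∏_{j=1}^{N−1} binom((m_1+⋯+m_j) − (i_1+⋯+i_{j−1}), i_j) · ∏_{i=1}^{i_j} (i − 1 − μ(j))] · ∏_{i=1}^{n − (i_1+⋯+i_{N−1})} (i − 1 − μ(N)). Then B(m_1,…,m_N) ≥ 0. -/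
/-!
Write `(x)ₖ = x (x + 1) ⋯ (x + k - 1)` for the rising factorial (`ascPochhammer`), so that
`∏_{i=1}^{k} (i - 1 - μ) = (-μ)ₖ`. In the sum defining `-B`, the last index `i_{N-1}` can be
summed out by the Chu–Vandermonde identity `∑ₖ C(r,k) (x)ₖ (y)_{p+r-k} = (y)ₚ (x+y+p)ᵣ`;
what is left is a sum of the same shape with one index fewer and `μ(N-1)` replaced by
`μ(N-1) + μ(N) - m_N`. By induction,
`-B = ∏ⱼ (m_{j+1} + ⋯ + m_N - μ(j) - ⋯ - μ(N))_{m_j}`.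
If `j₀` is the last index with `m_{j₀} ≠ 0`, its factor is `(-t)_{m_{j₀}}` with
`t ∈ [0, 1]`, hence `≤ 0`, while every earlier factor with `m_j ≠ 0` has argument
`≥ 1 - 1 = 0`.
-/

open Finset Polynomial

section Pochhammer

variable {R : Type*} [CommSemiring R]

theorem ascPochhammer_eval_eq_prod_range (x : R) (k : ℕ) :
    (ascPochhammer R k).eval x = ∏ l ∈ range k, (x + l) := by
  induction k with
  | zero => simp
  | succ k ih => rw [ascPochhammer_succ_eval, ih, prod_range_succ]

theorem ascPochhammer_add_eval (x : R) (p k : ℕ) :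
    (ascPochhammer R (p + k)).eval x =
      (ascPochhammer R p).eval x * (ascPochhammer R k).eval (x + p) := by
  simp only [ascPochhammer_eval_eq_prod_range, prod_range_add, Nat.cast_add, add_assoc]

theorem ascPochhammer_eval_add (x y : R) (k : ℕ) :
    (ascPochhammer R k).eval (x + y) = ∑ ij ∈ antidiagonal k,
      (k.choose ij.1 : R) * ((ascPochhammer R ij.1).eval x * (ascPochhammer R ij.2).eval y) := by
  induction k with
  | zero => simp
  | succ k ih =>
    rw [sum_antidiagonal_choose_succ_mul
      (fun i j => (ascPochhammer R i).eval x * (ascPochhammer R j).eval y),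
      ascPochhammer_succ_eval, ih, sum_mul, ← sum_add_distrib]
    refine sum_congr rfl fun ij hij => ?_
    rw [HasAntidiagonal.mem_antidiagonal] at hij
    rw [← Nat.choose_symm_of_eq_add hij.symm, ascPochhammer_succ_eval, ascPochhammer_succ_eval,
      ← hij]
    push_cast
    ring

theorem sum_range_choose_mul_ascPochhammer_eval (x y : R) (r p : ℕ) :
    ∑ k ∈ range (r + 1), (r.choose k : R) *
        ((ascPochhammer R k).eval x * (ascPochhammer R (p + (r - k))).eval y) =
      (ascPochhammer R p).eval y * (ascPochhammer R r).eval (x + (y + p)) := by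
  rw [ascPochhammer_eval_add, Nat.sum_antidiagonal_eq_sum_range_succ (fun i j =>
    (r.choose i : R) * ((ascPochhammer R i).eval x * (ascPochhammer R j).eval (y + p))), mul_sum]
  refine sum_congr rfl fun k _ => ?_
  rw [ascPochhammer_add_eval]
  ring

end Pochhammer

theorem ascPochhammer_eval_neg_eq_prod_range {R : Type*} [CommRing R] (x : R) (k : ℕ) :
    (ascPochhammer R k).eval (-x) = ∏ l ∈ range k, ((l : R) - x) := by
  simp only [ascPochhammer_eval_eq_prod_range, neg_add_eq_sub]

section Sign

variable {R : Type*} [CommRing R] [LinearOrder R] [IsStrictOrderedRing R]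

theorem ascPochhammer_eval_nonneg {x : R} (hx : 0 ≤ x) (k : ℕ) :
    0 ≤ (ascPochhammer R k).eval x := by
  rw [ascPochhammer_eval_eq_prod_range]
  exact prod_nonneg fun l _ => by positivity

theorem ascPochhammer_eval_nonpos {x : R} (h1 : -1 ≤ x) (h0 : x ≤ 0) {k : ℕ} (hk : k ≠ 0) :
    (ascPochhammer R k).eval x ≤ 0 := by
  obtain ⟨k, rfl⟩ := Nat.exists_eq_succ_of_ne_zero hk
  rw [ascPochhammer_eval_eq_prod_range, prod_range_succ']
  refine mul_nonpos_of_nonneg_of_nonpos (prod_nonneg fun l _ => ?_) (by simpa using h0)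
  push_cast
  linarith [(l.cast_nonneg : (0 : R) ≤ l)]

theorem prod_ascPochhammer_eval_nonpos (K : ℕ) (m : ℕ → ℕ) (A : ℕ → R)
    (hA1 : ∀ j, -1 ≤ A j) (hA0 : ∀ j, A j ≤ 0) (hm : ∃ j ∈ range (K + 1), m j ≠ 0) :
    ∏ j ∈ range (K + 1),
      (ascPochhammer R (m j)).eval ((∑ s ∈ Ioc j K, m s : ℕ) + A j) ≤ 0 := by
  obtain ⟨j₀, hj₀, hm₀⟩ := hm
  obtain ⟨js, hjs, hlast⟩ := exists_max_image ((range (K + 1)).filter (m · ≠ 0)) id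
    ⟨j₀, mem_filter.mpr ⟨hj₀, hm₀⟩⟩
  rw [mem_filter] at hjs
  have htail : ∑ s ∈ Ioc js K, m s = 0 := sum_eq_zero fun s hs => by
    rw [mem_Ioc] at hs
    by_contra h
    exact (hlast s (mem_filter.mpr ⟨mem_range.mpr (by omega), h⟩)).not_gt hs.1
  rw [← mul_prod_erase _ _ hjs.1, htail, Nat.cast_zero, zero_add]
  refine mul_nonpos_of_nonpos_of_nonneg (ascPochhammer_eval_nonpos (hA1 js) (hA0 js) hjs.2)
    (prod_nonneg fun j hj => ?_)
  obtain ⟨hne, hj⟩ := mem_erase.mp hj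
  by_cases hmj : m j = 0
  · simp [hmj]
  have hlt : j < js := lt_of_le_of_ne (hlast j (mem_filter.mpr ⟨hj, hmj⟩)) hne
  have hjsK : js ≤ K := Nat.lt_succ_iff.mp (mem_range.mp hjs.1)
  have hpos : 1 ≤ ∑ s ∈ Ioc j K, m s :=
    (Nat.one_le_iff_ne_zero.mpr hjs.2).trans
      (single_le_sum (fun _ _ => Nat.zero_le _) (mem_Ioc.mpr ⟨hlt, hjsK⟩))
  refine ascPochhammer_eval_nonneg ?_ _
  have : (1 : R) ≤ (∑ s ∈ Ioc j K, m s : ℕ) := by exact_mod_cast hpos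
  linarith [hA1 j]

end Sign

theorem sum_piFinset_const_snoc {α M : Type*} [AddCommMonoid M] {n : ℕ} (s : Finset α)
    (g : (Fin (n + 1) → α) → M) :
    ∑ f ∈ Fintype.piFinset (fun _ => s), g f =
      ∑ f ∈ Fintype.piFinset (fun _ : Fin n => s), ∑ k ∈ s, g (Fin.snoc f k) := by
  have h := filter_piFinset_eq_map_snocEquiv (fun _ : Fin (n + 1) => s) (fun _ => True)
  rw [filter_true, filter_true] at h
  rw [h, sum_map, sum_product_right]
  rfl

section ChainSum

abbrev ChainAdmissible (m : ℕ → ℕ) {K : ℕ} (i : Fin K → ℕ) : Prop :=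
  ∀ j : Fin K, i j ≤ (∑ s ∈ Iic (j : ℕ), m s) - ∑ s ∈ Iio j, i s

theorem chainAdmissible_snoc_iff {m : ℕ → ℕ} {K : ℕ} (i : Fin K → ℕ) (k : ℕ) :
    ChainAdmissible m (Fin.snoc i k : Fin (K + 1) → ℕ) ↔
      ChainAdmissible m i ∧ k ≤ (∑ s ∈ Iic K, m s) - ∑ s, i s := by
  simp [ChainAdmissible, Fin.forall_fin_succ', Fin.sum_Iio_castSucc, Fin.Iio_last_eq_map]

theorem ChainAdmissible.sum_le {m : ℕ → ℕ} : ∀ {K : ℕ} {i : Fin K → ℕ},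
    ChainAdmissible m i → ∑ s, i s ≤ ∑ s ∈ Iic K, m s
  | 0, _, _ => by simp
  | K + 1, i, h => by
    rw [← Fin.snoc_init_self i, chainAdmissible_snoc_iff] at h
    have := h.1.sum_le
    simp only [Fin.init] at h this
    rw [Fin.sum_univ_castSucc, sum_Iic_add_zero]
    omega

variable {R : Type*} [CommSemiring R]

/-- With `a = -μ` this is `-B` for weights and multiplicities indexed by `0, …, K`, provided
`b ≥ m 0 + ⋯ + m K`: `b` only bounds the entries of the tuples. -/
noncomputable def chainSum (K b : ℕ) (m : ℕ → ℕ) (a : ℕ → R) : R :=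
  ∑ i ∈ (Fintype.piFinset fun _ : Fin K => range (b + 1)).filter (ChainAdmissible m),
    (∏ j : Fin K, (((∑ s ∈ Iic (j : ℕ), m s) - ∑ s ∈ Iio j, i s).choose (i j) : R) *
        (ascPochhammer R (i j)).eval (a j)) *
      (ascPochhammer R ((∑ s ∈ Iic K, m s) - ∑ s, i s)).eval (a K)

theorem chainSum_succ (K b : ℕ) (m : ℕ → ℕ) (a : ℕ → R)
    (hb : ∑ s ∈ Iic K, m s ≤ b) :
    chainSum (K + 1) b m a = (ascPochhammer R (m (K + 1))).eval (a (K + 1)) *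
      chainSum K b m (Function.update a K (a K + (a (K + 1) + m (K + 1)))) := by
  unfold chainSum
  rw [sum_filter, sum_filter, sum_piFinset_const_snoc, mul_sum]
  refine sum_congr rfl fun i _ => ?_
  simp only [chainAdmissible_snoc_iff]
  split_ifs with hi
  swap
  · simp [hi]
  have hsum := hi.sum_le
  set r := (∑ s ∈ Iic K, m s) - ∑ s, i s with hr
  have hrange : (range (b + 1)).filter (· ≤ r) = range (r + 1) := by
    ext k
    simp only [mem_filter, mem_range]
    omega
  have hprefix : ∀ j : Fin K, Function.update a K (a K + (a (K + 1) + m (K + 1))) j = a j :=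
    fun j => Function.update_of_ne j.isLt.ne _ _
  simp only [and_iff_right hi, hprefix, Function.update_self]
  rw [← sum_filter, hrange, mul_left_comm, ← sum_range_choose_mul_ascPochhammer_eval, mul_sum]
  refine sum_congr rfl fun k hk => ?_
  have hk : k ≤ r := Nat.lt_succ_iff.mp (mem_range.mp hk)
  simp only [Fin.prod_univ_castSucc, Fin.sum_univ_castSucc, Fin.snoc_castSucc, Fin.snoc_last,
    Fin.sum_Iio_castSucc, Fin.val_castSucc, Fin.val_last, Fin.Iio_last_eq_map, sum_map,
    Fin.coe_castSuccEmb, sum_Iic_add_zero]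
  rw [show ∑ s ∈ Iic K, m s + m (K + 1) - (∑ s, i s + k) = m (K + 1) + (r - k) by omega]
  ring

theorem chainSum_eq_prod (K b : ℕ) (m : ℕ → ℕ) (a : ℕ → R)
    (hb : ∑ s ∈ Iic K, m s ≤ b) :
    chainSum K b m a = ∏ j ∈ range (K + 1),
      (ascPochhammer R (m j)).eval ((∑ s ∈ Ioc j K, m s : ℕ) + ∑ s ∈ Icc j K, a s) := by
  induction K generalizing a with
  | zero => simp [chainSum, ← Nat.range_succ_eq_Iic]
  | succ K ih =>
    have hbK : ∑ s ∈ Iic K, m s ≤ b := le_trans (by simp [sum_Iic_add_zero]) hb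
    rw [chainSum_succ K b m a hbK, ih _ hbK, prod_range_succ _ (K + 1), mul_comm]
    congr 1
    · refine prod_congr rfl fun j hj => ?_
      have hj : j ≤ K := Nat.lt_succ_iff.mp (mem_range.mp hj)
      have hK : K ∈ Icc j K := by simp [hj]
      rw [sum_Ioc_succ_top hj, sum_Icc_succ_top (by omega), sum_update_of_mem hK,
        sum_eq_add_sum_sdiff_singleton_of_mem hK a]
      push_cast
      congr 1
      ring
    · simp

end ChainSum

theorem Fin.sum_Iic_eq_sum_Iic_val {M : Type*} [AddCommMonoid M] {N : ℕ} (f : Fin N → M)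
    (g : ℕ → M) (hfg : ∀ s : Fin N, f s = g s) (j : Fin N) :
    ∑ s ∈ Iic j, f s = ∑ t ∈ Iic (j : ℕ), g t := by
  rw [← Fin.map_valEmbedding_Iic, sum_map]
  exact sum_congr rfl fun s _ => hfg s

/-- Let `μ` be probability weights on `{1,…,N}` and `m_1,…,m_N ≥ 0` with
`n = m_1+⋯+m_N ≥ 1`.  Then
`B(m_1,…,m_N) = -∑_{(i_1,…,i_{N-1})} [∏_{j=1}^{N-1} C(M_j - I_{j-1}, i_j) ∏_{i=1}^{i_j}(i-1-μ(j))]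
   ∏_{i=1}^{n - I_{N-1}} (i-1-μ(N)) ≥ 0`,
where `M_j = m_1+⋯+m_j`, `I_j = i_1+⋯+i_j`, and the sum runs over tuples of nonnegative
integers with `i_j ≤ M_j - I_{j-1}` for each `j`.  Tuples are encoded 0-indexed as
`i : Fin (N-1) → ℕ` (constraints force `i_j ≤ n`, so values range over `range (n+1)`);
the 1-based index `j ∈ {1,…,N-1}` corresponds to `j : Fin (N-1)`, with `μ(j)` given by
`μ (Fin.castLE _ j)` and `μ(N)` by `μ ⟨N-1, _⟩`. -/
theorem stmt5 (N : ℕ) (hN : 1 ≤ N)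
    (μ : Fin N → ℝ) (hμ0 : ∀ j, 0 ≤ μ j) (hμ1 : ∑ j, μ j = 1)
    (m : Fin N → ℕ) (hn : 1 ≤ ∑ j, m j) :
    0 ≤ -∑ i ∈ (Fintype.piFinset fun _ : Fin (N - 1) =>
            Finset.range ((∑ j, m j) + 1)).filter
          (fun i : Fin (N - 1) → ℕ => ∀ j : Fin (N - 1),
            i j ≤ (∑ s ∈ Finset.Iic (Fin.castLE (Nat.sub_le N 1) j), m s)
                    - ∑ s ∈ Finset.Iio j, i s),
        (∏ j : Fin (N - 1),
            (((∑ s ∈ Finset.Iic (Fin.castLE (Nat.sub_le N 1) j), m s)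
                - ∑ s ∈ Finset.Iio j, i s).choose (i j) : ℝ) *
              ∏ l ∈ Finset.range (i j), ((l : ℝ) - μ (Fin.castLE (Nat.sub_le N 1) j))) *
          ∏ l ∈ Finset.range ((∑ j, m j) - ∑ s : Fin (N - 1), i s),
            ((l : ℝ) - μ ⟨N - 1, by omega⟩) := by
  set m' : ℕ → ℕ := fun t => if h : t < N then m ⟨t, h⟩ else 0
  set μ' : ℕ → ℝ := fun t => if h : t < N then μ ⟨t, h⟩ else 0
  have hm' : ∀ s : Fin N, m s = m' s := fun s => by simp [m']
  have hμ' : ∀ s : Fin N, μ s = μ' s := fun s => by simp [μ']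
  have hμ'0 : ∀ t, 0 ≤ μ' t := fun t => dite_nonneg (fun _ => hμ0 _) fun _ => le_rfl
  have hrange : range N = Iic (N - 1) := by rw [← Nat.range_succ_eq_Iic, Nat.sub_add_cancel hN]
  have htotal : ∑ j, m j = ∑ s ∈ Iic (N - 1), m' s := by
    simp only [hm', Fin.sum_univ_eq_sum_range m' N, hrange]
  have hprob : ∑ s ∈ Iic (N - 1), μ' s = 1 := by
    rw [← hμ1, ← hrange, ← Fin.sum_univ_eq_sum_range μ' N]
    simp only [hμ']
  have hclosed : chainSum (N - 1) (∑ j, m j) m' (fun t => -μ' t) ≤ 0 := by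
    rw [chainSum_eq_prod _ _ _ _ htotal.ge]
    refine prod_ascPochhammer_eval_nonpos _ _ _ (fun j => ?_) (fun j => ?_) ?_
    · rw [sum_neg_distrib, neg_le_neg_iff, ← hprob]
      exact sum_le_sum_of_subset_of_nonneg Icc_subset_Iic_self fun t _ _ => hμ'0 t
    · exact sum_nonpos fun t _ => neg_nonpos.mpr (hμ'0 t)
    · rw [Nat.range_succ_eq_Iic]
      exact exists_ne_zero_of_sum_ne_zero (by omega)
  refine neg_nonneg.mpr (le_of_eq_of_le ?_ hclosed)
  unfold chainSum
  simp only [ascPochhammer_eval_neg_eq_prod_range, Fin.sum_Iic_eq_sum_Iic_val m m' hm', hμ',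
    Fin.val_castLE, ← htotal]
end

section
/- Suppose that for every integer n ≥ 1 and every tuple (k_1,…,k_n) of positive integers one has E_n(p_{k_1},…,p_{k_n}) ≥ 0. Then every coefficient of the formal power series 1 − ∏_{ω∈Ω}(1−p(ω))^{μ(ω)} in ℝ[[t]] is nonnegative. -/
open Finset

/-- The formal power series `p(ω) = ∑_{k ≥ 1} p_k(ω) t^k` (zero constant term). -/
noncomputable def pSer {Ω : Type*} (p : ℕ → Ω → ℝ) (ω : Ω) : PowerSeries ℝ :=
  PowerSeries.mk fun k => if k = 0 then 0 else p k ω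

/-- `log (1 - q) = -∑_{i ≥ 1} q^i / i` for a power series `q` with zero constant term;
since the constant term of `q` vanishes, the coefficient of `t^m` only involves
`i ≤ m`, so the defining sum may be truncated. -/
noncomputable def logOneSub (q : PowerSeries ℝ) : PowerSeries ℝ :=
  PowerSeries.mk fun m => -∑ i ∈ Finset.Icc 1 m, PowerSeries.coeff (R := ℝ) m (q ^ i) / i

/-- `exp q = ∑_{i ≥ 0} q^i / i!` for a power series `q` with zero constant term;
since the constant term of `q` vanishes, the coefficient of `t^m` only involves
`i ≤ m`, so the defining sum may be truncated. -/
noncomputable def expSer (q : PowerSeries ℝ) : PowerSeries ℝ :=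
  PowerSeries.mk fun m =>
    ∑ i ∈ Finset.range (m + 1), PowerSeries.coeff (R := ℝ) m (q ^ i) / i.factorial

/-!
Write `L = ∑ ω, μ ω • log (1 - p ω) = -∑_{i ≥ 1} M_i / i` with `M_i = ∑ ω, μ ω • (p ω)^i`.
Expanding `M_{i_1} ⋯ M_{i_j}` over positive words `κ` indexed by a disjoint union of blocks of
sizes `i_1, …, i_j` expresses `coeff m (L^j)` through the mixed moments of the blocks. This is
matched with the partition sums of `E_n` by the exponential formula: a partition of `Fin n` into
`j` blocks comes from `j!` surjections onto `Fin j`, there are `n! / ∏ i_r!` maps with fibre sizes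
`i`, and all of them give the same moment sum. Summing over `j` yields
`coeff m (1 - exp L) = ∑_{n ≥ 1} (1/n!) ∑_{k_1 + ⋯ + k_n = m, k_s ≥ 1} E_n(p_{k_1}, …, p_{k_n})`,
a nonnegative combination of the `E_n`.
-/

open PowerSeries Function
open scoped Nat

def posAntidiag (ι : Type*) [Fintype ι] [DecidableEq ι] (n : ℕ) : Finset (ι → ℕ) :=
  (univ.piAntidiag n).filter fun k => ∀ i, 0 < k i

section PosAntidiag

variable {ι κ : Type*} [Fintype ι] [DecidableEq ι] [Fintype κ] [DecidableEq κ]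

@[simp]
lemma mem_posAntidiag {n : ℕ} {k : ι → ℕ} :
    k ∈ posAntidiag ι n ↔ ∑ i, k i = n ∧ ∀ i, 0 < k i := by
  simp [posAntidiag]

lemma card_le_of_mem_posAntidiag {n : ℕ} {k : ι → ℕ} (hk : k ∈ posAntidiag ι n) :
    Fintype.card ι ≤ n := by
  rw [mem_posAntidiag] at hk
  calc Fintype.card ι = ∑ _i : ι, 1 := by simp
    _ ≤ ∑ i, k i := sum_le_sum fun i _ => hk.2 i
    _ = n := hk.1

lemma sum_posAntidiag_comp_equiv {M : Type*} [AddCommMonoid M] (e : ι ≃ κ) (n : ℕ)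
    (F : (κ → ℕ) → M) :
    ∑ k ∈ posAntidiag ι n, F (k ∘ e.symm) = ∑ k ∈ posAntidiag κ n, F k := by
  refine sum_nbij' (· ∘ e.symm) (· ∘ e) (fun k hk => ?_) (fun k hk => ?_)
    (fun k _ => by ext; simp) (fun k _ => by ext; simp) fun _ _ => rfl
  · simp only [mem_posAntidiag, Function.comp_apply] at hk ⊢
    exact ⟨by rw [e.symm.sum_comp k, hk.1], fun i => hk.2 _⟩
  · simp only [mem_posAntidiag, Function.comp_apply] at hk ⊢
    exact ⟨by rw [e.sum_comp k, hk.1], fun i => hk.2 _⟩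

lemma posAntidiag_eq_empty {N : ℕ} (hN : 0 < N) (h : Fintype.card κ ∉ Icc 1 N) :
    posAntidiag κ N = ∅ := by
  refine eq_empty_of_forall_notMem fun k hk => h (mem_Icc.2 ⟨?_, card_le_of_mem_posAntidiag hk⟩)
  obtain ⟨b, -, -⟩ := exists_ne_zero_of_sum_ne_zero ((mem_posAntidiag.1 hk).1.trans_ne hN.ne')
  exact Fintype.card_pos_iff.2 ⟨b⟩

lemma sum_piFinset_Icc_eq_sum_posAntidiag {M : Type*} [AddCommMonoid M] {N : ℕ}
    (G : (ι → ℕ) → M) (hG : ∀ i, ∑ r, i r ∉ Icc 1 N → G i = 0) :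
    ∑ i ∈ Fintype.piFinset fun _ : ι => Icc 1 N, G i =
      ∑ n ∈ Icc 1 N, ∑ i ∈ posAntidiag ι n, G i := by
  have hmaps : ∀ i ∈ (Fintype.piFinset fun _ : ι => Icc 1 N).filter (∑ r, · r ∈ Icc 1 N),
      ∑ r, i r ∈ Icc 1 N := fun i hi => (mem_filter.1 hi).2
  rw [← sum_filter_of_ne (p := (∑ r, · r ∈ Icc 1 N)) fun i _ h => by_contra (h ∘ hG i),
    ← sum_fiberwise_of_maps_to hmaps]
  refine sum_congr rfl fun n hn => sum_congr ?_ fun _ _ => rfl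
  ext i
  simp only [mem_filter, Fintype.mem_piFinset, mem_posAntidiag, mem_Icc]
  constructor
  · rintro ⟨⟨hi, -⟩, rfl⟩
    exact ⟨rfl, fun r => (hi r).1⟩
  · rintro ⟨rfl, hi⟩
    refine ⟨⟨fun r => ⟨hi r, ?_⟩, (mem_Icc.1 hn)⟩, rfl⟩
    exact (single_le_sum (fun _ _ => Nat.zero_le _) (mem_univ r)).trans (mem_Icc.1 hn).2

end PosAntidiag

section PowerSeries

variable {R : Type*} [CommSemiring R]

lemma PowerSeries.coeff_prod_eq_sum_posAntidiag {ι : Type*} [Fintype ι] [DecidableEq ι]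
    (f : ι → R⟦X⟧) (hf : ∀ i, constantCoeff (f i) = 0) (n : ℕ) :
    coeff n (∏ i, f i) = ∑ k ∈ posAntidiag ι n, ∏ i, coeff (k i) (f i) := by
  rw [coeff_prod, finsuppAntidiag, sum_map]
  refine (sum_attach (univ.piAntidiag n) fun k => ∏ i, coeff (k i) (f i)).trans ?_
  rw [posAntidiag, sum_filter_of_ne]
  intro k _ hk i
  by_contra! hi
  exact hk (prod_eq_zero (mem_univ i) (by rw [Nat.le_zero.1 hi, coeff_zero_eq_constantCoeff, hf]))

lemma PowerSeries.coeff_pow_eq_of_coeff_eq {f g : R⟦X⟧} {N : ℕ}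
    (h : ∀ d ≤ N, coeff d f = coeff d g) (j : ℕ) : coeff N (f ^ j) = coeff N (g ^ j) := by
  have htrunc : trunc (N + 1) f = trunc (N + 1) g := by
    ext d
    simp only [coeff_trunc]
    split_ifs with hd
    · exact h d (Nat.lt_succ_iff.1 hd)
    · rfl
  rw [← coeff_coe_trunc_of_lt (Nat.lt_succ_self N), ← trunc_trunc_pow, htrunc, trunc_trunc_pow,
    coeff_coe_trunc_of_lt (Nat.lt_succ_self N)]

lemma PowerSeries.coeff_pow_eq_zero_of_lt {f : R⟦X⟧} (hf : constantCoeff f = 0) {d i : ℕ}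
    (hd : d < i) : coeff d (f ^ i) = 0 :=
  X_pow_dvd_iff.1 (pow_dvd_pow_of_dvd (X_dvd_iff.2 hf) i) d hd

end PowerSeries

section Moments

variable {Ω : Type*} [Fintype Ω] (μ : Ω → ℝ) (p : ℕ → Ω → ℝ)

noncomputable def mixedMoment {β : Type*} (k : β → ℕ) (b : Finset β) : ℝ :=
  ∑ ω, μ ω * ∏ s ∈ b, p (k s) ω

noncomputable def fiberMomentSum {β ι : Type*} [Fintype β] [DecidableEq β] [Fintype ι]
    [DecidableEq ι] (N : ℕ) (g : β → ι) : ℝ :=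
  ∑ κ ∈ posAntidiag β N, ∏ r, mixedMoment μ p κ {z | g z = r}

lemma prod_mixedMoment_fiber {β ι : Type*} [Fintype β] [Fintype ι] [DecidableEq ι]
    (κ : β → ℕ) (g : β → ι) :
    ∏ r, mixedMoment μ p κ {z | g z = r} =
      ∑ ω : ι → Ω, (∏ r, μ (ω r)) * ∏ z, p (κ z) (ω (g z)) := by
  simp only [mixedMoment, Fintype.prod_sum, prod_mul_distrib]
  refine sum_congr rfl fun ω _ => congrArg _ ?_
  rw [← prod_fiberwise univ g fun z => p (κ z) (ω (g z))]
  exact prod_congr rfl fun r _ => prod_congr rfl fun z hz => by rw [(mem_filter.1 hz).2]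

lemma fiberMomentSum_comp_equiv {α β ι : Type*} [Fintype α] [DecidableEq α] [Fintype β]
    [DecidableEq β] [Fintype ι] [DecidableEq ι] (N : ℕ) (g : β → ι) (e : α ≃ β) :
    fiberMomentSum μ p N (g ∘ e) = fiberMomentSum μ p N g := by
  rw [fiberMomentSum, fiberMomentSum, ← sum_posAntidiag_comp_equiv e]
  refine sum_congr rfl fun k _ => prod_congr rfl fun r _ => sum_congr rfl fun ω _ => ?_
  exact congrArg _ (prod_equiv e (by simp) (by simp))

end Moments

section Series

variable {Ω : Type*} (μ : Ω → ℝ) (p : ℕ → Ω → ℝ)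

lemma constantCoeff_pSer (ω : Ω) : constantCoeff (pSer p ω) = 0 := by
  rw [← coeff_zero_eq_constantCoeff_apply, pSer, coeff_mk, if_pos rfl]

lemma coeff_logOneSub_eq_of_le {q : ℝ⟦X⟧} (hq : constantCoeff q = 0) {d N : ℕ} (hd : d ≤ N) :
    coeff d (logOneSub q) = ∑ i ∈ Icc 1 N, -(i : ℝ)⁻¹ * coeff d (q ^ i) := by
  rw [logOneSub, coeff_mk, ← sum_neg_distrib]
  refine sum_subset (Icc_subset_Icc_right hd) (fun i hi hi' => ?_) |>.trans
    (sum_congr rfl fun i _ => by ring)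
  rw [coeff_pow_eq_zero_of_lt hq (by simp_all), zero_div, neg_zero]

lemma coeff_prod_pSer {β : Type*} [Fintype β] [DecidableEq β] (g : β → Ω) (N : ℕ) :
    coeff N (∏ z, pSer p (g z)) = ∑ κ ∈ posAntidiag β N, ∏ z, p (κ z) (g z) := by
  rw [coeff_prod_eq_sum_posAntidiag _ fun z => constantCoeff_pSer p (g z)]
  refine sum_congr rfl fun κ hκ => prod_congr rfl fun z _ => ?_
  rw [pSer, coeff_mk, if_neg ((mem_posAntidiag.1 hκ).2 z).ne']

variable [Fintype Ω]

noncomputable def momentSeries (i : ℕ) : ℝ⟦X⟧ := ∑ ω, C (μ ω) * pSer p ω ^ i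

lemma coeff_prod_momentSeries {ι : Type*} [Fintype ι] [DecidableEq ι] (i : ι → ℕ) (N : ℕ) :
    coeff N (∏ r, momentSeries μ p (i r)) =
      fiberMomentSum μ p N (Sigma.fst : (Σ r, Fin (i r)) → ι) := by
  have hpow : ∀ ω : ι → Ω, ∏ r, pSer p (ω r) ^ i r = ∏ z : Σ r, Fin (i r), pSer p (ω z.1) := by
    intro ω
    simp [Fintype.prod_sigma]
  simp only [momentSeries, Fintype.prod_sum, prod_mul_distrib, ← map_prod, hpow, map_sum,
    coeff_C_mul, coeff_prod_pSer, fiberMomentSum, prod_mixedMoment_fiber, mul_sum]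
  exact sum_comm

noncomputable def logProdOneSub : ℝ⟦X⟧ := ∑ ω, C (μ ω) * logOneSub (pSer p ω)

lemma coeff_logProdOneSub_eq_of_le {d N : ℕ} (hd : d ≤ N) :
    coeff d (logProdOneSub μ p) = coeff d (∑ i ∈ Icc 1 N, C (-(i : ℝ)⁻¹) * momentSeries μ p i) := by
  simp only [logProdOneSub, momentSeries, map_sum, coeff_C_mul,
    coeff_logOneSub_eq_of_le (constantCoeff_pSer p _) hd, mul_sum]
  refine sum_comm.trans (sum_congr rfl fun i _ => sum_congr rfl fun ω _ => by ring)

lemma coeff_logProdOneSub_pow (N j : ℕ) :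
    coeff N (logProdOneSub μ p ^ j) = (-1) ^ j * ∑ i ∈ Fintype.piFinset fun _ : Fin j => Icc 1 N,
      (∏ r, (i r : ℝ)⁻¹) * fiberMomentSum μ p N (Sigma.fst : (Σ r, Fin (i r)) → Fin j) := by
  rw [coeff_pow_eq_of_coeff_eq (fun d hd => coeff_logProdOneSub_eq_of_le μ p hd), ← Fin.prod_const,
    prod_univ_sum]
  simp only [prod_mul_distrib, ← map_prod, map_sum, coeff_C_mul, coeff_prod_momentSeries,
    prod_neg, card_univ, Fintype.card_fin, mul_sum, mul_assoc]

end Series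

section FiberPartition

variable {α ι : Type*} [Fintype α] [DecidableEq ι]

lemma injective_fiber_of_surjective {f : α → ι} (hf : Surjective f) :
    Injective fun r => ({x | f x = r} : Finset α) := fun r r' h => by
  obtain ⟨x, rfl⟩ := hf r
  have hx : x ∈ ({x | f x = r'} : Finset α) := by simp [← h]
  exact (mem_filter.1 hx).2

variable [DecidableEq α]

lemma fiber_comp_part_eq (σ : Finpartition (univ : Finset α)) (e : σ.parts ≃ ι) (r : ι) :
    ({x | e ⟨σ.part x, σ.part_mem.2 (mem_univ x)⟩ = r} : Finset α) = e.symm r := by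
  ext x
  rw [mem_filter, ← e.eq_symm_apply, Subtype.ext_iff, σ.part_eq_iff_mem (e.symm r).2]
  simp

def fiberPartition (f : α → ι) : Finpartition (univ : Finset α) :=
  letI : DecidableRel (Setoid.ker f).r := fun a b => decidable_of_iff (f a = f b) Iff.rfl
  Finpartition.ofSetoid (Setoid.ker f)

variable [Fintype ι]

lemma parts_fiberPartition {f : α → ι} (hf : Surjective f) :
    (fiberPartition f).parts = univ.image fun r => ({x | f x = r} : Finset α) := by
  ext b
  simp only [fiberPartition, Finpartition.ofSetoid, Finpartition.ofSetSetoid_parts,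
    mem_image, mem_univ, true_and]
  constructor
  · rintro ⟨a, rfl⟩
    exact ⟨f a, by ext; simp [eq_comm]⟩
  · rintro ⟨r, rfl⟩
    obtain ⟨a, rfl⟩ := hf r
    exact ⟨a, by ext; simp [eq_comm]⟩

lemma card_filter_fiberPartition_eq (σ : Finpartition (univ : Finset α)) :
    #{f : α → ι | Surjective f ∧ fiberPartition f = σ} = Fintype.card (σ.parts ≃ ι) := by
  symm
  refine card_bij (fun e _ x => e ⟨σ.part x, σ.part_mem.2 (mem_univ x)⟩) (fun e _ => ?_)
    (fun e _ e' _ h => ?_) (fun f hf => ?_)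
  · have hsurj : Surjective fun x => e ⟨σ.part x, σ.part_mem.2 (mem_univ x)⟩ := fun r => by
      obtain ⟨x, hx⟩ := σ.nonempty_of_mem_parts (e.symm r).2
      exact ⟨x, by rw [← fiber_comp_part_eq σ e r] at hx; exact (mem_filter.1 hx).2⟩
    refine mem_filter.2 ⟨mem_univ _, hsurj, Finpartition.ext ?_⟩
    rw [parts_fiberPartition hsurj]
    ext b
    simp only [fiber_comp_part_eq, mem_image, mem_univ, true_and]
    exact ⟨by rintro ⟨r, rfl⟩; exact (e.symm r).2, fun hb => ⟨e ⟨b, hb⟩, by simp⟩⟩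
  · ext ⟨b, hb⟩
    obtain ⟨x, hx⟩ := σ.nonempty_of_mem_parts hb
    have := congrFun h x
    simp only [σ.part_eq_of_mem hb hx] at this
    rw [this]
  · obtain ⟨-, hsurj, rfl⟩ := mem_filter.1 hf
    have hmem : ∀ r, ({x | f x = r} : Finset α) ∈ (fiberPartition f).parts := fun r => by
      rw [parts_fiberPartition hsurj]
      exact mem_image_of_mem _ (mem_univ r)
    have hbij : Bijective fun r =>
        (⟨({x | f x = r} : Finset α), hmem r⟩ : (fiberPartition f).parts) := by
      refine ⟨fun r r' h => injective_fiber_of_surjective hsurj (congrArg Subtype.val h),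
        fun ⟨b, hb⟩ => ?_⟩
      rw [parts_fiberPartition hsurj] at hb
      obtain ⟨r, -, rfl⟩ := mem_image.1 hb
      exact ⟨r, rfl⟩
    refine ⟨(Equiv.ofBijective _ hbij).symm, mem_univ _, funext fun x => ?_⟩
    rw [Equiv.symm_apply_eq, Equiv.ofBijective_apply, Subtype.ext_iff]
    exact (fiberPartition f).part_eq_of_mem (hmem (f x)) (by simp)

lemma card_equiv_eq_ite (β : Type*) [Fintype β] [DecidableEq β] :
    Fintype.card (β ≃ ι) = if Fintype.card β = Fintype.card ι then (Fintype.card ι)! else 0 := by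
  split_ifs with h
  · rw [Fintype.card_equiv (Fintype.equivOfCardEq h), h]
  · exact Fintype.card_eq_zero_iff.2 ⟨fun e => h (Fintype.card_congr e)⟩

lemma sum_surjective_prod_fiber_eq {R : Type*} [CommSemiring R] (w : Finset α → R) :
    ∑ f : α → ι with Surjective f, ∏ r, w {x | f x = r} = (Fintype.card ι)! *
      ∑ σ : Finpartition (univ : Finset α) with #σ.parts = Fintype.card ι, ∏ b ∈ σ.parts, w b := by
  rw [← sum_fiberwise_of_maps_to (g := fiberPartition) (t := univ) fun _ _ => mem_univ _,
    sum_filter, mul_sum]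
  refine sum_congr rfl fun σ _ => ?_
  have hconst : ∀ f ∈ ({f : α → ι | Surjective f} : Finset _).filter (fiberPartition · = σ),
      ∏ r, w {x | f x = r} = ∏ b ∈ σ.parts, w b := fun f hf => by
    obtain ⟨hsurj, rfl⟩ := by simpa using hf
    rw [parts_fiberPartition hsurj,
      prod_image fun r _ r' _ h => injective_fiber_of_surjective hsurj h]
  rw [sum_congr rfl hconst, sum_const, filter_filter, card_filter_fiberPartition_eq,
    card_equiv_eq_ite, Fintype.card_coe, nsmul_eq_mul]
  split_ifs <;> simp

end FiberPartition

section FiberCard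

variable {α β ι : Type*} [Fintype α] [DecidableEq ι]

lemma exists_equiv_sigma_of_card_fiber {i : ι → ℕ} {f : α → ι}
    (hf : ∀ r, #{x | f x = r} = i r) : ∃ e : α ≃ Σ r, Fin (i r), Sigma.fst ∘ e = f :=
  ⟨Equiv.ofFiberEquiv fun r =>
    (Fintype.equivFinOfCardEq (by rw [Fintype.card_subtype, hf r])).trans
      (Equiv.sigmaSubtype (β := fun r => Fin (i r)) r).symm,
    funext (Equiv.ofFiberEquiv_map _)⟩

variable [DecidableEq α] [Fintype β] [DecidableEq β] [Fintype ι]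

lemma card_filter_sigma_fst (i : ι → ℕ) (r : ι) :
    #{z : Σ r, Fin (i r) | z.1 = r} = i r := by
  rw [← Fintype.card_subtype, Fintype.card_congr (Equiv.sigmaSubtype r), Fintype.card_fin]

lemma card_filter_comp_eq_comp (e₀ : α ≃ β) (g : β → ι) :
    #{e : α ≃ β | g ∘ e = g ∘ e₀} = ∏ r, (#{x | g (e₀ x) = r})! := by
  rw [← Fintype.card_subtype, Fintype.card_congr (Equiv.subtypeEquiv
    (p := fun e : α ≃ β => g ∘ e = g ∘ e₀) (q := fun σ : Equiv.Perm α => (g ∘ e₀) ∘ σ = g ∘ e₀)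
    (Equiv.equivCongr (Equiv.refl α) e₀.symm) fun e => ?_), DomMulAct.stabilizer_card]
  · simp [Fintype.card_subtype]
  · simp [funext_iff]

lemma card_filter_card_fiber_mul_prod_factorial {i : ι → ℕ} (hi : ∑ r, i r = Fintype.card α) :
    #{f : α → ι | ∀ r, #{x | f x = r} = i r} * ∏ r, (i r)! = (Fintype.card α)! := by
  have hcard : Fintype.card (Σ r, Fin (i r)) = Fintype.card α := by simp [hi]
  rw [← Fintype.card_equiv (Fintype.equivOfCardEq hcard.symm), ← card_univ,
    card_eq_sum_card_fiberwise (f := fun e : α ≃ Σ r, Fin (i r) => Sigma.fst ∘ e)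
      (t := {f : α → ι | ∀ r, #{x | f x = r} = i r}) fun e _ => ?_, ← smul_eq_mul, ← sum_const]
  · refine sum_congr rfl fun f hf => ?_
    obtain ⟨e₀, rfl⟩ := exists_equiv_sigma_of_card_fiber (mem_filter.1 hf).2
    rw [card_filter_comp_eq_comp]
    exact prod_congr rfl fun r _ => congrArg _ ((mem_filter.1 hf).2 r).symm
  · refine mem_filter.2 ⟨mem_univ _, fun r => ?_⟩
    rw [← card_filter_sigma_fst i r]
    exact card_equiv e (by simp)

lemma sum_surjective_eq_sum_posAntidiag {M : Type*} [AddCommMonoid M] (F : (α → ι) → M) :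
    ∑ f : α → ι with Surjective f, F f = ∑ i ∈ posAntidiag ι (Fintype.card α),
      ∑ f : α → ι with ∀ r, #{x | f x = r} = i r, F f := by
  rw [← sum_fiberwise_of_maps_to (g := fun f r => #{x | f x = r})
    (t := posAntidiag ι (Fintype.card α)) fun f hf => ?_]
  · refine sum_congr rfl fun i hi => sum_congr ?_ fun _ _ => rfl
    ext f
    simp only [mem_filter, mem_univ, true_and, funext_iff]
    refine ⟨And.right, fun h => ⟨fun r => ?_, h⟩⟩
    obtain ⟨x, hx⟩ := card_pos.1 ((h r).symm ▸ (mem_posAntidiag.1 hi).2 r)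
    exact ⟨x, (mem_filter.1 hx).2⟩
  · refine mem_posAntidiag.2 ⟨(card_eq_sum_card_fiberwise fun _ _ => mem_univ _).symm, fun r => ?_⟩
    obtain ⟨x, rfl⟩ := (mem_filter.1 hf).2 r
    exact card_pos.2 ⟨x, by simp⟩

end FiberCard

section Main

variable {Ω : Type*} [Fintype Ω] (μ : Ω → ℝ) (p : ℕ → Ω → ℝ)

lemma factorial_mul_inv_cast {n : ℕ} (hn : 0 < n) : (n ! : ℝ) * (n : ℝ)⁻¹ = ((n - 1)! : ℝ) := by
  rw [← Nat.mul_factorial_pred hn.ne', Nat.cast_mul, mul_comm, ← mul_assoc,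
    inv_mul_cancel₀ (by exact_mod_cast hn.ne'), one_mul]

noncomputable def partitionMomentSum {α : Type*} [Fintype α] [DecidableEq α] (j : ℕ)
    (k : α → ℕ) : ℝ :=
  ∑ σ : Finpartition (univ : Finset α) with #σ.parts = j,
    ∏ b ∈ σ.parts, ((#b - 1)! : ℝ) * mixedMoment μ p k b

variable {α ι : Type*} [Fintype α] [DecidableEq α] [Fintype ι] [DecidableEq ι]

lemma factorial_mul_sum_partitionMomentSum (N : ℕ) :
    (Fintype.card ι)! * ∑ k ∈ posAntidiag α N, partitionMomentSum μ p (Fintype.card ι) k =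
    (Fintype.card α)! * ∑ i ∈ posAntidiag ι (Fintype.card α),
      (∏ r, (i r : ℝ)⁻¹) * fiberMomentSum μ p N (Sigma.fst : (Σ r, Fin (i r)) → ι) := by
  simp_rw [partitionMomentSum, mul_sum (s := posAntidiag α N), ← sum_surjective_prod_fiber_eq,
    prod_mul_distrib]
  rw [sum_comm, sum_surjective_eq_sum_posAntidiag, mul_sum]
  refine sum_congr rfl fun i hi => ?_
  have hterm : ∀ f ∈ ({f : α → ι | ∀ r, #{x | f x = r} = i r} : Finset _),
      ∑ k ∈ posAntidiag α N, (∏ r, ((#{x | f x = r} - 1)! : ℝ)) *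
        ∏ r, mixedMoment μ p k {x | f x = r} =
      (∏ r, ((i r - 1)! : ℝ)) * fiberMomentSum μ p N (Sigma.fst : (Σ r, Fin (i r)) → ι) := by
    intro f hf
    obtain ⟨e, rfl⟩ := exists_equiv_sigma_of_card_fiber (mem_filter.1 hf).2
    rw [← mul_sum, ← fiberMomentSum, fiberMomentSum_comp_equiv]
    simp only [(mem_filter.1 hf).2]
  rw [sum_congr rfl hterm, sum_const, nsmul_eq_mul, ← mul_assoc, ← mul_assoc]
  congr 1
  -- `(i r)! / i r = (i r - 1)!` is where the `1 / i` of the logarithm is absorbed.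
  rw [← card_filter_card_fiber_mul_prod_factorial (mem_posAntidiag.1 hi).1, Nat.cast_mul, mul_assoc,
    Nat.cast_prod, ← prod_mul_distrib]
  exact congrArg _ <| prod_congr rfl fun r _ =>
    (factorial_mul_inv_cast ((mem_posAntidiag.1 hi).2 r)).symm

lemma coeff_logProdOneSub_pow_div_factorial {N : ℕ} (hN : 0 < N) (j : ℕ) :
    coeff N (logProdOneSub μ p ^ j) / j ! = (-1) ^ j * ∑ n ∈ Icc 1 N, (n ! : ℝ)⁻¹ *
      ∑ k ∈ posAntidiag (Fin n) N, partitionMomentSum μ p j k := by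
  rw [coeff_logProdOneSub_pow, sum_piFinset_Icc_eq_sum_posAntidiag, mul_div_assoc, sum_div]
  · refine congrArg _ (sum_congr rfl fun n _ => ?_)
    have h := factorial_mul_sum_partitionMomentSum μ p (α := Fin n) (ι := Fin j) N
    simp only [Fintype.card_fin] at h
    rw [div_eq_iff (by positivity), inv_mul_eq_div, div_mul_eq_mul_div, eq_div_iff (by positivity)]
    linear_combination -h
  · intro i hi
    rw [fiberMomentSum, posAntidiag_eq_empty hN (by simpa using hi), sum_empty, mul_zero]

lemma sum_finpartition_eq_sum_partitionMomentSum {α : Type*} [Fintype α] [DecidableEq α] (k : α → ℕ) {N : ℕ}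
    (hN : Fintype.card α ≤ N) :
    ∑ σ : Finpartition (univ : Finset α), (-1 : ℝ) ^ (#σ.parts + 1) *
        (∏ b ∈ σ.parts, ((#b - 1)! : ℝ)) * ∏ b ∈ σ.parts, mixedMoment μ p k b =
      ∑ j ∈ range (N + 1), (-1) ^ (j + 1) * partitionMomentSum μ p j k := by
  rw [← sum_fiberwise_of_maps_to (g := fun σ : Finpartition (univ : Finset α) => #σ.parts)
    (t := range (N + 1)) fun σ _ => mem_range.2 (Nat.lt_succ_of_le (σ.card_parts_le_card.trans hN))]
  refine sum_congr rfl fun j _ => ?_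
  rw [partitionMomentSum, mul_sum]
  refine sum_congr rfl fun σ hσ => ?_
  rw [(mem_filter.1 hσ).2, mul_assoc, prod_mul_distrib]

theorem coeff_one_sub_expSer_logProdOneSub (N : ℕ) :
    coeff N (1 - expSer (logProdOneSub μ p)) = ∑ n ∈ Icc 1 N, (n ! : ℝ)⁻¹ *
      ∑ k ∈ posAntidiag (Fin n) N, ∑ σ : Finpartition (univ : Finset (Fin n)),
        (-1 : ℝ) ^ (#σ.parts + 1) * (∏ b ∈ σ.parts, ((#b - 1)! : ℝ)) *
          ∏ b ∈ σ.parts, mixedMoment μ p k b := by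
  rcases Nat.eq_zero_or_pos N with rfl | hN
  · simp [expSer]
  rw [map_sub, coeff_one, if_neg hN.ne', expSer, coeff_mk, zero_sub]
  simp_rw [coeff_logProdOneSub_pow_div_factorial μ p hN, mul_sum, ← sum_neg_distrib]
  rw [sum_comm]
  refine sum_congr rfl fun n hn => ?_
  rw [sum_comm]
  refine sum_congr rfl fun k _ => ?_
  rw [← mul_sum, sum_finpartition_eq_sum_partitionMomentSum μ p k (by simpa using (mem_Icc.1 hn).2), mul_sum]
  exact sum_congr rfl fun j _ => by ring

end Main

theorem stmt6_general (Ω : Type*) [Fintype Ω]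
    (μ : Ω → ℝ)
    (p : ℕ → Ω → ℝ)
    (hE : ∀ n : ℕ, 1 ≤ n → ∀ k : Fin n → ℕ, (∀ s, 1 ≤ k s) →
      0 ≤ ∑ σ : Finpartition (Finset.univ : Finset (Fin n)),
          (-1 : ℝ) ^ (σ.parts.card + 1) *
            (∏ b ∈ σ.parts, ((b.card - 1).factorial : ℝ)) *
            ∏ b ∈ σ.parts, (∑ ω, μ ω * ∏ s ∈ b, p (k s) ω)) :
    ∀ m : ℕ, 0 ≤ PowerSeries.coeff (R := ℝ) m
        (1 - expSer (∑ ω, PowerSeries.C (R := ℝ) (μ ω) * logOneSub (pSer p ω))) := by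
  intro m
  rw [← logProdOneSub, coeff_one_sub_expSer_logProdOneSub]
  exact sum_nonneg fun n hn => mul_nonneg (by positivity) <| sum_nonneg fun k hk =>
    hE n (mem_Icc.1 hn).1 k (mem_posAntidiag.1 hk).2

/-- If `E_n(p_{k_1},…,p_{k_n}) ≥ 0` for every `n ≥ 1` and all positive
integers `k_1,…,k_n`, then every coefficient of
`1 - ∏_{ω ∈ Ω} (1 - p(ω))^{μ(ω)} = 1 - exp (∑_ω μ(ω) log (1 - p(ω)))` is nonnegative. -/
theorem stmt6 (Ω : Type*) [Fintype Ω] [Nonempty Ω]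
    (μ : Ω → ℝ) (hμ0 : ∀ ω, 0 ≤ μ ω) (hμ1 : ∑ ω, μ ω = 1)
    (p : ℕ → Ω → ℝ)
    (hE : ∀ n : ℕ, 1 ≤ n → ∀ k : Fin n → ℕ, (∀ s, 1 ≤ k s) →
      0 ≤ ∑ σ : Finpartition (Finset.univ : Finset (Fin n)),
          (-1 : ℝ) ^ (σ.parts.card + 1) *
            (∏ b ∈ σ.parts, ((b.card - 1).factorial : ℝ)) *
            ∏ b ∈ σ.parts, (∑ ω, μ ω * ∏ s ∈ b, p (k s) ω)) :
    ∀ m : ℕ, 0 ≤ PowerSeries.coeff (R := ℝ) m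
        (1 - expSer (∑ ω, PowerSeries.C (R := ℝ) (μ ω) * logOneSub (pSer p ω))) :=
  stmt6_general Ω μ p hE
end

section
/- Let N ≥ 1, let μ be probability weights on {1,…,N}, and for each integer k ≥ 1 let p_k : {1,…,N} → ℝ be nonnegative and nondecreasing (0 ≤ p_k(j) ≤ p_k(j') whenever j ≤ j'). Let p(j) = Σ_{k≥1} p_k(j) t^k ∈ ℝ[[t]]. Then every coefficient of the formal power series 1 − ∏_{j=1}^N (1−p(j))^{μ(j)} is nonnegative. -/
open Finset

/-!
Put `Q_j = p(j)` and `L_j = log (1 - Q_j)`, so that `exp L_j = 1 - Q_j`. Two neighbours can be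
merged: if `0 ≤ Q_a ≤ Q_b` coefficientwise and `θ ∈ [0, 1]`, then
`(1 - Q_a) ^ (1 - θ) (1 - Q_b) ^ θ = (1 - Q_a) (1 - s) ^ θ` with `s = (Q_b - Q_a) / (1 - Q_a) ≥ 0`.
The coefficients of `(1 - X) ^ θ` satisfy `(n + 1) c_{n+1} = (n - θ) c_n`, so
`(1 - X) ^ θ = 1 - X T` with `T ≥ 0`, and therefore
`1 - (1 - Q_a) ^ (1 - θ) (1 - Q_b) ^ θ = Q_a + (Q_b - Q_a) T(s) ≥ Q_a`.
Merging the two largest series again and again keeps the family ordered and ends with a single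
series dominating `Q_1 ≥ 0`. The identities between
`exp` and `log` used on the way all follow from uniqueness of solutions of `g f' = h f`.
-/

open Finset PowerSeries

namespace PowerSeries

section NonnegCoeffs

variable {R : Type*}

def nonnegCoeffs [Semiring R] [PartialOrder R] [IsOrderedRing R] : Subsemiring R⟦X⟧ where
  carrier := {f | ∀ n, 0 ≤ coeff n f}
  mul_mem' {f g} hf hg n := by
    rw [coeff_mul]
    exact sum_nonneg fun _ _ => mul_nonneg (hf _) (hg _)
  one_mem' n := by
    rw [coeff_one]
    split_ifs <;> simp
  add_mem' {f g} hf hg n := by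
    rw [map_add]
    exact add_nonneg (hf n) (hg n)
  zero_mem' n := by simp

theorem mem_nonnegCoeffs [Semiring R] [PartialOrder R] [IsOrderedRing R] {f : R⟦X⟧} :
    f ∈ nonnegCoeffs ↔ ∀ n, 0 ≤ coeff n f :=
  Iff.rfl

theorem coeff_pow_eq_zero_of_lt_s9 [CommSemiring R] {q : R⟦X⟧} (hq : constantCoeff q = 0) {m d : ℕ}
    (hmd : m < d) : coeff m (q ^ d) = 0 := by
  obtain ⟨r, rfl⟩ := X_dvd_iff.2 hq
  rw [mul_pow, coeff_X_pow_mul', if_neg hmd.not_ge]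

theorem coeff_subst_eq_sum [CommRing R] {q : R⟦X⟧} (hq : constantCoeff q = 0) (f : R⟦X⟧)
    (m : ℕ) : coeff m (f.subst q) = ∑ d ∈ range (m + 1), coeff d f * coeff m (q ^ d) := by
  rw [coeff_subst' (HasSubst.of_constantCoeff_zero' hq)]
  refine finsum_eq_sum_of_support_subset _ fun d hd => ?_
  by_contra hdm
  rw [coe_range, Set.mem_Iio, not_lt] at hdm
  exact hd (show coeff d f • coeff m (q ^ d) = 0 by
    rw [coeff_pow_eq_zero_of_lt_s9 hq (by omega), smul_zero])

theorem constantCoeff_subst_of_constantCoeff_eq_zero [CommRing R] {q : R⟦X⟧}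
    (hq : constantCoeff q = 0) (f : R⟦X⟧) : constantCoeff (f.subst q) = constantCoeff f := by
  rw [← coeff_zero_eq_constantCoeff_apply, coeff_subst_eq_sum hq]
  simp

theorem subst_mem_nonnegCoeffs [CommRing R] [PartialOrder R] [IsOrderedRing R] {f q : R⟦X⟧}
    (hf : f ∈ nonnegCoeffs) (hq : q ∈ nonnegCoeffs) (hq0 : constantCoeff q = 0) :
    f.subst q ∈ nonnegCoeffs := fun m => by
  rw [coeff_subst_eq_sum hq0]
  exact sum_nonneg fun d _ => mul_nonneg (hf d) (pow_mem hq d m)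

theorem inv_one_sub_mem_nonnegCoeffs {K : Type*} [Field K] [PartialOrder K] [IsOrderedRing K]
    {p : K⟦X⟧} (hp : p ∈ nonnegCoeffs) (hp0 : constantCoeff p = 0) :
    (1 - p)⁻¹ ∈ nonnegCoeffs := by
  have hsubst := HasSubst.of_constantCoeff_zero' hp0
  have hinv : (mk 1 : K⟦X⟧).subst p * (1 - p) = 1 := by
    simpa [← coe_substAlgHom hsubst, substAlgHom_X] using
      congrArg (substAlgHom hsubst) (mk_one_mul_one_sub_eq_one K)
  rw [← PowerSeries.eq_inv_iff_mul_eq_one (by simp [hp0])|>.2 hinv]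
  exact subst_mem_nonnegCoeffs (fun n => by simp) hp hp0

end NonnegCoeffs

theorem eq_of_mul_derivative_eq {K : Type*} [Field K] [CharZero K] {f₁ f₂ g h : K⟦X⟧}
    (hg : constantCoeff g ≠ 0) (hf₂ : constantCoeff f₂ ≠ 0)
    (h₁ : g * d⁄dX K f₁ = h * f₁) (h₂ : g * d⁄dX K f₂ = h * f₂)
    (h0 : constantCoeff f₁ = constantCoeff f₂) : f₁ = f₂ := by
  have hinv : f₂⁻¹ * f₂ = 1 := PowerSeries.inv_mul_cancel _ hf₂
  have hD : g * d⁄dX K (f₁ * f₂⁻¹) = 0 := by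
    rw [Derivation.leibniz, derivative_inv', smul_eq_mul, smul_eq_mul]
    linear_combination f₂⁻¹ * h₁ - f₁ * f₂⁻¹ ^ 2 * h₂ - h * f₁ * f₂⁻¹ * hinv
  have hquot : f₁ * f₂⁻¹ = 1 := by
    refine derivative.ext ?_ ?_
    · rw [derivative_one]
      exact (mul_eq_zero.1 hD).resolve_left fun h => hg (by rw [h, map_zero])
    · rw [map_mul, map_one, PowerSeries.constantCoeff_inv, h0]
      exact mul_inv_cancel₀ hf₂
  calc f₁ = f₁ * f₂⁻¹ * f₂ := by rw [mul_assoc, hinv, mul_one]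
    _ = f₂ := by rw [hquot, one_mul]

theorem derivative_C_mul {R : Type*} [CommSemiring R] (r : R) (f : R⟦X⟧) :
    d⁄dX R (C r * f) = C r * d⁄dX R f := by
  rw [Derivation.leibniz, derivative_C, smul_zero, add_zero, smul_eq_mul]

section ExpLog

local notation "D" => d⁄dX ℝ

theorem constantCoeff_expSer (q : ℝ⟦X⟧) : constantCoeff (expSer q) = 1 := by
  rw [← coeff_zero_eq_constantCoeff_apply, expSer, coeff_mk]
  simp

theorem constantCoeff_logOneSub (q : ℝ⟦X⟧) : constantCoeff (logOneSub q) = 0 := by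
  rw [← coeff_zero_eq_constantCoeff_apply, logOneSub, coeff_mk]
  simp

theorem expSer_eq_subst {q : ℝ⟦X⟧} (hq : constantCoeff q = 0) :
    expSer q = (exp ℝ).subst q := by
  ext m
  rw [expSer, coeff_mk, coeff_subst_eq_sum hq]
  refine sum_congr rfl fun d _ => ?_
  rw [coeff_exp]
  simp [div_eq_inv_mul]

theorem coeff_logOneSub_X (d : ℕ) :
    coeff d (logOneSub X) = if d = 0 then 0 else -(d : ℝ)⁻¹ := by
  rw [logOneSub, coeff_mk]
  split_ifs with hd
  · simp [hd]
  · rw [sum_eq_single_of_mem d (by simp; omega) fun i _ hid => by simp [coeff_X_pow, Ne.symm hid]]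
    simp

theorem logOneSub_eq_subst {q : ℝ⟦X⟧} (hq : constantCoeff q = 0) :
    logOneSub q = (logOneSub X).subst q := by
  ext m
  rw [logOneSub, coeff_mk, coeff_subst_eq_sum hq, range_eq_Ico,
    sum_eq_sum_Ico_succ_bot (Nat.succ_pos m), Nat.succ_eq_add_one, Ico_add_one_right_eq_Icc,
    ← sum_neg_distrib]
  simp only [coeff_logOneSub_X, if_true, zero_mul, zero_add]
  refine sum_congr rfl fun d hd => ?_
  rw [if_neg (by simp at hd; omega)]
  ring

theorem derivative_expSer {q : ℝ⟦X⟧} (hq : constantCoeff q = 0) :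
    D (expSer q) = expSer q * D q := by
  rw [expSer_eq_subst hq, derivative_subst (HasSubst.of_constantCoeff_zero' hq), derivative_exp]

theorem one_sub_mul_derivative_logOneSub {q : ℝ⟦X⟧} (hq : constantCoeff q = 0) :
    (1 - q) * D (logOneSub q) = -D q := by
  have hsubst := HasSubst.of_constantCoeff_zero' hq
  have hDlog : D (logOneSub X) = -mk 1 := by
    ext n
    rw [coeff_derivative, coeff_logOneSub_X, if_neg n.succ_ne_zero]
    simp [field]
  have hgeom : (1 - q) * (mk 1 : ℝ⟦X⟧).subst q = 1 := by
    simpa [← coe_substAlgHom hsubst, substAlgHom_X, mul_comm] using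
      congrArg (substAlgHom hsubst) (mk_one_mul_one_sub_eq_one ℝ)
  rw [logOneSub_eq_subst hq, derivative_subst hsubst, hDlog, ← coe_substAlgHom hsubst, map_neg,
    coe_substAlgHom]
  linear_combination (-D q) * hgeom

theorem expSer_add {a b : ℝ⟦X⟧} (ha : constantCoeff a = 0) (hb : constantCoeff b = 0) :
    expSer (a + b) = expSer a * expSer b := by
  have hab : constantCoeff (a + b) = 0 := by rw [map_add, ha, hb, add_zero]
  refine eq_of_mul_derivative_eq (g := 1) (h := D (a + b)) (by simp)
    (by simp [constantCoeff_expSer]) ?_ ?_ (by simp [constantCoeff_expSer])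
  · rw [one_mul, derivative_expSer hab, mul_comm]
  · rw [one_mul, Derivation.leibniz, smul_eq_mul, smul_eq_mul, derivative_expSer ha,
      derivative_expSer hb, map_add]
    ring

theorem expSer_logOneSub {q : ℝ⟦X⟧} (hq : constantCoeff q = 0) :
    expSer (logOneSub q) = 1 - q := by
  refine eq_of_mul_derivative_eq (g := 1 - q) (h := -D q) (by simp [hq]) (by simp [hq])
    ?_ ?_ (by simp [constantCoeff_expSer, hq])
  · rw [derivative_expSer (constantCoeff_logOneSub q)]
    linear_combination expSer (logOneSub q) * one_sub_mul_derivative_logOneSub hq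
  · rw [map_sub, derivative_one]
    ring

end ExpLog

section Binomial

local notation "D" => d⁄dX ℝ

noncomputable def oneSubXRpow (θ : ℝ) : ℝ⟦X⟧ :=
  expSer (C θ * logOneSub X)

theorem one_sub_X_mul_derivative_oneSubXRpow (θ : ℝ) :
    (1 - X) * D (oneSubXRpow θ) = -C θ * oneSubXRpow θ := by
  have hlog := one_sub_mul_derivative_logOneSub (q := X) constantCoeff_X
  rw [derivative_X] at hlog
  rw [oneSubXRpow, derivative_expSer (by rw [map_mul, constantCoeff_logOneSub, mul_zero]),
    derivative_C_mul]
  linear_combination C θ * expSer (C θ * logOneSub X) * hlog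

theorem coeff_succ_oneSubXRpow (θ : ℝ) (n : ℕ) :
    (n + 1) * coeff (n + 1) (oneSubXRpow θ) = (n - θ) * coeff n (oneSubXRpow θ) := by
  have h := congrArg (coeff n) (one_sub_X_mul_derivative_oneSubXRpow θ)
  rw [sub_mul, one_mul, map_sub, coeff_derivative, neg_mul, map_neg, coeff_C_mul] at h
  rcases n with _ | k
  · rw [coeff_zero_X_mul] at h
    norm_num at h ⊢
    linarith
  · rw [coeff_succ_X_mul, coeff_derivative] at h
    push_cast at h ⊢
    linarith

theorem coeff_oneSubXRpow_nonpos {θ : ℝ} (hθ₀ : 0 ≤ θ) (hθ₁ : θ ≤ 1) {n : ℕ} (hn : 1 ≤ n) :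
    coeff n (oneSubXRpow θ) ≤ 0 := by
  induction n, hn using Nat.le_induction with
  | base =>
    have h := coeff_succ_oneSubXRpow θ 0
    rw [coeff_zero_eq_constantCoeff_apply, oneSubXRpow, constantCoeff_expSer] at h
    norm_num at h
    rw [oneSubXRpow, h, neg_nonpos]
    exact hθ₀
  | succ n hn ih =>
    have h := coeff_succ_oneSubXRpow θ n
    have hn' : θ ≤ n := hθ₁.trans (by exact_mod_cast hn)
    nlinarith

theorem exists_one_sub_oneSubXRpow_eq_X_mul {θ : ℝ} (hθ₀ : 0 ≤ θ) (hθ₁ : θ ≤ 1) :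
    ∃ T ∈ nonnegCoeffs, 1 - oneSubXRpow θ = X * T := by
  have hshift := sub_const_eq_X_mul_shift (1 - oneSubXRpow θ)
  rw [map_sub, map_one, oneSubXRpow, constantCoeff_expSer, sub_self, map_zero, sub_zero] at hshift
  refine ⟨_, fun n => ?_, hshift⟩
  rw [coeff_mk, map_sub, coeff_one, if_neg n.succ_ne_zero, zero_sub, neg_nonneg]
  exact coeff_oneSubXRpow_nonpos hθ₀ hθ₁ (Nat.le_add_left 1 n)

theorem expSer_C_mul_eq_subst_oneSubXRpow {c s : ℝ⟦X⟧} (hc : constantCoeff c = 0)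
    (hs : constantCoeff s = 0) (h : expSer c = 1 - s) (θ : ℝ) :
    expSer (C θ * c) = (oneSubXRpow θ).subst s := by
  have hsubst := HasSubst.of_constantCoeff_zero' hs
  have hDc : (1 - s) * D c = -D s := by
    have := derivative_expSer hc
    rw [h, map_sub, derivative_one] at this
    linear_combination -this
  refine eq_of_mul_derivative_eq (g := 1 - s) (h := -(C θ * D s)) (by simp [hs]) ?_ ?_ ?_ ?_
  · rw [constantCoeff_subst_of_constantCoeff_eq_zero hs, oneSubXRpow, constantCoeff_expSer]
    exact one_ne_zero
  · rw [derivative_expSer (by rw [map_mul, hc, mul_zero]), derivative_C_mul]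
    linear_combination C θ * expSer (C θ * c) * hDc
  · have hode := congrArg (substAlgHom hsubst) (one_sub_X_mul_derivative_oneSubXRpow θ)
    simp only [map_mul, map_sub, map_one, map_neg, substAlgHom_X, coe_substAlgHom,
      subst_C] at hode
    change (1 - s) * _ = -C θ * _ at hode
    rw [derivative_subst hsubst]
    linear_combination D s * hode
  · rw [constantCoeff_subst_of_constantCoeff_eq_zero hs, oneSubXRpow, constantCoeff_expSer,
      constantCoeff_expSer]

end Binomial

section Merge

theorem expSer_sub_expSer_convex_mem_nonnegCoeffs {a b : ℝ⟦X⟧} (ha : constantCoeff a = 0)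
    (hb : constantCoeff b = 0) (hpa : 1 - expSer a ∈ nonnegCoeffs)
    (hab : expSer a - expSer b ∈ nonnegCoeffs) {θ : ℝ} (hθ₀ : 0 ≤ θ) (hθ₁ : θ ≤ 1) :
    expSer a - expSer (C (1 - θ) * a + C θ * b) ∈ nonnegCoeffs := by
  set e := expSer a
  set d := e - expSer b with hd
  set s := d * e⁻¹
  have he : constantCoeff e ≠ 0 := by simp [e, constantCoeff_expSer]
  have hba : constantCoeff (b - a) = 0 := by rw [map_sub, ha, hb, sub_zero]
  have hs₀ : constantCoeff s = 0 := by simp [s, d, e, constantCoeff_expSer]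
  have hes : e * s = d := by rw [mul_comm, mul_assoc, PowerSeries.inv_mul_cancel _ he, mul_one]
  have hs : s ∈ nonnegCoeffs := by
    refine mul_mem hab ?_
    simpa using inv_one_sub_mem_nonnegCoeffs hpa (by simp [e, constantCoeff_expSer])
  have hquot : expSer (b - a) = 1 - s := by
    have h := expSer_add hba ha
    rw [sub_add_cancel] at h
    apply mul_right_cancel₀ (b := e) fun h0 => he (by rw [h0, map_zero])
    linear_combination -h + hes - hd
  obtain ⟨T, hT, hBT⟩ := exists_one_sub_oneSubXRpow_eq_X_mul hθ₀ hθ₁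
  have hsubst := HasSubst.of_constantCoeff_zero' hs₀
  have hBs := congrArg (substAlgHom hsubst) hBT
  simp only [map_mul, map_sub, map_one, substAlgHom_X, coe_substAlgHom] at hBs
  have hmean : expSer (C (1 - θ) * a + C θ * b) = e * (oneSubXRpow θ).subst s := by
    rw [show C (1 - θ) * a + C θ * b = a + C θ * (b - a) by rw [map_sub, map_one]; ring,
      expSer_add ha (by rw [map_mul, hba, mul_zero]),
      expSer_C_mul_eq_subst_oneSubXRpow hba hs₀ hquot]
  rw [hmean, show e - e * (oneSubXRpow θ).subst s = d * T.subst s by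
    linear_combination e * hBs + T.subst s * hes]
  exact mul_mem hab (subst_mem_nonnegCoeffs hT hs hs₀)

theorem exists_weighted_mean_expSer_sub_mem_nonnegCoeffs {a b : ℝ⟦X⟧} (ha : constantCoeff a = 0)
    (hb : constantCoeff b = 0) (hpa : 1 - expSer a ∈ nonnegCoeffs)
    (hab : expSer a - expSer b ∈ nonnegCoeffs) {α β : ℝ} (hα : 0 ≤ α) (hβ : 0 ≤ β) :
    ∃ c, constantCoeff c = 0 ∧ C α * a + C β * b = C (α + β) * c ∧
      expSer a - expSer c ∈ nonnegCoeffs := by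
  rcases (add_nonneg hα hβ).eq_or_lt with hαβ | hαβ
  · obtain ⟨rfl, rfl⟩ : α = 0 ∧ β = 0 := ⟨by linarith, by linarith⟩
    exact ⟨a, ha, by simp, by simp [zero_mem]⟩
  refine ⟨C (1 - β / (α + β)) * a + C (β / (α + β)) * b, by simp [ha, hb], ?_,
    expSer_sub_expSer_convex_mem_nonnegCoeffs ha hb hpa hab (div_nonneg hβ hαβ.le)
      (div_le_one_of_le₀ (by linarith) hαβ.le)⟩
  rw [mul_add, ← mul_assoc, ← mul_assoc, ← map_mul, ← map_mul]
  congr 3 <;> field_simp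
  ring

end Merge

/-- `M` is the weighted mean, with total weight `α`, of the series above `s` merged so far. -/
theorem one_sub_expSer_sum_mem_nonnegCoeffs {ι : Type*} [LinearOrder ι] {L : ι → ℝ⟦X⟧}
    {w : ι → ℝ} (hL₀ : ∀ i, constantCoeff (L i) = 0) (hw : ∀ i, 0 ≤ w i)
    (hL : ∀ i, 1 - expSer (L i) ∈ nonnegCoeffs)
    (hmono : ∀ i j, i ≤ j → expSer (L i) - expSer (L j) ∈ nonnegCoeffs) (s : Finset ι)
    {M : ℝ⟦X⟧} {α : ℝ} (hM₀ : constantCoeff M = 0) (hM : 1 - expSer M ∈ nonnegCoeffs)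
    (hMs : ∀ i ∈ s, expSer (L i) - expSer M ∈ nonnegCoeffs) (hα : 0 ≤ α)
    (hsum : α + ∑ i ∈ s, w i = 1) :
    1 - expSer (C α * M + ∑ i ∈ s, C (w i) * L i) ∈ nonnegCoeffs := by
  induction s using Finset.induction_on_max generalizing M α with
  | empty =>
    obtain rfl : α = 1 := by simpa using hsum
    simpa using hM
  | insert a s has ih =>
    have ha : a ∉ s := fun h => lt_irrefl a (has a h)
    obtain ⟨c, hc₀, hc, hac⟩ := exists_weighted_mean_expSer_sub_mem_nonnegCoeffs (hL₀ a) hM₀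
      (hL a) (hMs a (mem_insert_self a s)) (hw a) hα
    rw [sum_insert ha, ← add_assoc, add_comm (C α * M), hc]
    refine ih hc₀ ?_ (fun i hi => ?_) (add_nonneg (hw a) hα) ?_
    · simpa using add_mem (hL a) hac
    · simpa using add_mem (hmono i a (has i hi).le) hac
    · rw [sum_insert ha] at hsum
      linarith

end PowerSeries

open PowerSeries

/-- Let `N ≥ 1`, let `μ` be probability weights on `{1,…,N}`, and for
each `k ≥ 1` let `p_k : {1,…,N} → ℝ` be nonnegative and nondecreasing.  Then every
coefficient of `1 - ∏_{j=1}^N (1 - p(j))^{μ(j)} = 1 - exp (∑_j μ(j) log (1 - p(j)))`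
is nonnegative. -/
theorem stmt9 (N : ℕ) (hN : 1 ≤ N)
    (μ : Fin N → ℝ) (hμ0 : ∀ j, 0 ≤ μ j) (hμ1 : ∑ j, μ j = 1)
    (p : ℕ → Fin N → ℝ)
    (hp0 : ∀ k, 1 ≤ k → ∀ j, 0 ≤ p k j)
    (hpmono : ∀ k, 1 ≤ k → Monotone (p k)) :
    ∀ m : ℕ, 0 ≤ PowerSeries.coeff (R := ℝ) m
        (1 - expSer (∑ j, PowerSeries.C (R := ℝ) (μ j) * logOneSub (pSer p j))) := by
  have hp₀ : ∀ j, constantCoeff (pSer p j) = 0 := fun j => by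
    rw [← coeff_zero_eq_constantCoeff_apply, pSer, coeff_mk, if_pos rfl]
  have hexp : ∀ j, expSer (logOneSub (pSer p j)) = 1 - pSer p j := fun j =>
    expSer_logOneSub (hp₀ j)
  have hp : ∀ j, 1 - expSer (logOneSub (pSer p j)) ∈ nonnegCoeffs := fun j k => by
    rw [hexp, sub_sub_cancel, pSer, coeff_mk]
    split_ifs with hk
    exacts [le_rfl, hp0 k (by omega) j]
  have hmono : ∀ i j, i ≤ j →
      expSer (logOneSub (pSer p i)) - expSer (logOneSub (pSer p j)) ∈ nonnegCoeffs :=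
    fun i j hij k => by
      rw [hexp, hexp, sub_sub_sub_cancel_left, map_sub]
      simp only [pSer, coeff_mk]
      split_ifs with hk
      exacts [le_of_eq (sub_self 0).symm, sub_nonneg.2 (hpmono k (by omega) hij)]
  let top : Fin N := ⟨N - 1, by omega⟩
  have key := one_sub_expSer_sum_mem_nonnegCoeffs (fun j => constantCoeff_logOneSub _) hμ0 hp
    hmono univ (constantCoeff_logOneSub (pSer p top)) (hp top)
    (fun i _ => hmono i top (Fin.le_iff_val_le_val.2 (Nat.le_sub_one_of_lt i.isLt))) le_rfl
    (by simpa using hμ1)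
  rw [map_zero, zero_mul, zero_add] at key
  exact mem_nonnegCoeffs.1 key
end
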